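/- arXiv:1108.6020 — 7 statements merged into one kernel-verified Lean document; each statement's English description precedes it below -/
import Mathlib

section
/- Let (M, K) be a Grothendieck–Verdier category with duality functor D. (i) The assignment L ↦ DL defines an antiequivalence from the full subcategory of invertible objects of M to the full subcategory of dualizing objects of M, and for every invertible object L one has DL ≅ K ⊗ L⁻¹. (ii) Likewise, L ↦ D⁻¹L defines such an antiequivalence, and D⁻¹L ≅ L⁻¹ ⊗ K. (iii) If L ∈ M is invertible then D²L is invertible and there is a canonical isomorphism K ⊗ L⁻¹ ≅ (D²L)⁻¹ ⊗ K. In particular, a dualizing object, if it exists, is unique up to tensoring by an invertible object. -/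
open CategoryTheory Opposite MonoidalCategory

universe v u

/-- A Grothendieck–Verdier category structure on a monoidal category `M`:
a dualizing object `K`, the duality anti-equivalence `D`, and the natural
family of bijections `Hom(X ⊗ Y, K) ≃ Hom(X, D Y)`. -/
structure GVCat (M : Type u) [Category.{v} M] [MonoidalCategory M] where
  K : M
  D : Mᵒᵖ ≌ M
  homEquiv : ∀ X Y : M, (X ⊗ Y ⟶ K) ≃ (X ⟶ D.functor.obj (op Y))
  homEquiv_natX : ∀ {X X' : M} (Y : M) (f : X' ⟶ X) (h : X ⊗ Y ⟶ K),
    homEquiv X' Y (f ▷ Y ≫ h) = f ≫ homEquiv X Y h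
  homEquiv_natY : ∀ (X : M) {Y Y' : M} (g : Y' ⟶ Y) (h : X ⊗ Y ⟶ K),
    homEquiv X Y' (X ◁ g ≫ h) = homEquiv X Y h ≫ D.functor.map g.op

namespace GVCat

variable {M : Type u} [Category.{v} M] [MonoidalCategory M] (G : GVCat M)

/-- The duality functor on objects: `D Y`. -/
abbrev d (Y : M) : M := G.D.functor.obj (op Y)

/-- The inverse duality functor on objects: `D⁻¹ X`. -/
abbrev dinv (X : M) : M := (G.D.inverse.obj X).unop

/-- The duality functor on morphisms. -/
abbrev dmap {A B : M} (f : A ⟶ B) : G.d B ⟶ G.d A := G.D.functor.map f.op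

/-- The inverse duality functor on morphisms. -/
abbrev dinvmap {A B : M} (f : A ⟶ B) : G.dinv B ⟶ G.dinv A := (G.D.inverse.map f).unop

/-- `D² Y`. -/
abbrev dd (Y : M) : M := G.d (G.d Y)

/-- `D²` as a covariant endofunctor of `M`. -/
def ddF : M ⥤ M := G.D.functor.rightOp ⋙ G.D.functor

/-- The second defining natural bijection `Hom(X ⊗ Y, K) ≃ Hom(Y, D⁻¹ X)`. -/
def homEquiv' (X Y : M) : (X ⊗ Y ⟶ G.K) ≃ (Y ⟶ G.dinv X) :=
  (G.homEquiv X Y).trans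
    ((G.D.symm.toAdjunction.homEquiv X (op Y)).symm.trans (opEquiv _ _))

/-- The canonical isomorphism `D⁻¹ (D X) ≅ X`. -/
def dinvD (X : M) : G.dinv (G.d X) ≅ X := (G.D.unitIso.app (op X)).unop

/-- The canonical isomorphism `D (D⁻¹ X) ≅ X`. -/
def dDinv (X : M) : G.d (G.dinv X) ≅ X := G.D.counitIso.app X

/-- The canonical natural bijection `g : Hom(X ⊗ Y, K) ≃ Hom(D²Y ⊗ X, K)`. -/
def g (X Y : M) : (X ⊗ Y ⟶ G.K) ≃ (G.dd Y ⊗ X ⟶ G.K) :=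
  ((G.homEquiv X Y).trans ((Iso.refl X).homCongr (G.dinvD (G.d Y)).symm)).trans
    (G.homEquiv' (G.dd Y) X).symm

end GVCat

/-- An object of a monoidal category is invertible if it has a two-sided tensor inverse. -/
def TensorInvertible {M : Type u} [Category.{v} M] [MonoidalCategory M] (L : M) : Prop :=
  ∃ Y : M, Nonempty (L ⊗ Y ≅ 𝟙_ M) ∧ Nonempty (Y ⊗ L ≅ 𝟙_ M)

/-- An object is dualizing if it is the dualizing object of some Grothendieck–Verdier
structure on `M`. -/
def IsDualizingObj {M : Type u} [Category.{v} M] [MonoidalCategory M] (K₀ : M) : Prop :=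
  ∃ G : GVCat M, G.K = K₀


namespace GVCat

variable {M : Type u} [Category.{v} M] [MonoidalCategory M] (G : GVCat M)

lemma homEquiv_symm_natX {X X' : M} (Y : M) (f : X' ⟶ X) (u : X ⟶ G.d Y) :
    (G.homEquiv X' Y).symm (f ≫ u) = f ▷ Y ≫ (G.homEquiv X Y).symm u := by
  apply (G.homEquiv X' Y).injective
  rw [Equiv.apply_symm_apply, G.homEquiv_natX, Equiv.apply_symm_apply]

lemma homEquiv'_apply (X Y : M) (h : X ⊗ Y ⟶ G.K) :
    G.homEquiv' X Y h =
      ((G.D.symm.toAdjunction.homEquiv X (op Y)).symm (G.homEquiv X Y h)).unop := rfl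

lemma homEquiv'_natY (X : M) {Y Y' : M} (g : Y' ⟶ Y) (h : X ⊗ Y ⟶ G.K) :
    G.homEquiv' X Y' (X ◁ g ≫ h) = g ≫ G.homEquiv' X Y h := by
  rw [homEquiv'_apply, homEquiv'_apply, G.homEquiv_natY]
  rw [show G.D.functor.map g.op = G.D.symm.inverse.map g.op from rfl,
    Adjunction.homEquiv_naturality_right_symm]
  rfl

lemma homEquiv'_symm_natY (X : M) {Y Y' : M} (g : Y' ⟶ Y) (u : Y ⟶ G.dinv X) :
    (G.homEquiv' X Y').symm (g ≫ u) = X ◁ g ≫ (G.homEquiv' X Y).symm u := by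
  apply (G.homEquiv' X Y').injective
  rw [Equiv.apply_symm_apply, homEquiv'_natY, Equiv.apply_symm_apply]

/-- Build an isomorphism from a family of hom-bijections natural in the source. -/
def isoOfHomEquiv {A B : M} (e : ∀ Z : M, (Z ⟶ A) ≃ (Z ⟶ B))
    (nat : ∀ {Z Z' : M} (f : Z' ⟶ Z) (g : Z ⟶ A), e Z' (f ≫ g) = f ≫ e Z g) : A ≅ B :=
  Yoneda.ext A B (fun {Z} g => e Z g) (fun {Z} g => (e Z).symm g)
    (fun f => (e _).symm_apply_apply f) (fun f => (e _).apply_symm_apply f)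
    (fun f g => nat f g)

/-- Tensoring on the right with an invertible object is an equivalence. -/
def rEquiv (L Y : M) (e1 : L ⊗ Y ≅ 𝟙_ M) (e2 : Y ⊗ L ≅ 𝟙_ M) : M ≌ M :=
  CategoryTheory.Equivalence.mk (tensorRight L) (tensorRight Y)
    (NatIso.ofComponents
      (fun X => (ρ_ X).symm ≪≫ (whiskerLeftIso X e1).symm ≪≫ (α_ X L Y).symm)
      (by
        intro X X' f
        dsimp
        simp only [whiskerLeftIso_hom, whiskerRightIso_hom, Iso.symm_hom, Iso.symm_inv]
        rw [rightUnitor_inv_naturality_assoc, ← whisker_exchange_assoc,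
          associator_inv_naturality_left]
        simp only [Category.assoc])
      )
    (NatIso.ofComponents
      (fun X => α_ X Y L ≪≫ whiskerLeftIso X e2 ≪≫ ρ_ X)
      (by
        intro X X' f
        dsimp
        simp only [whiskerLeftIso_hom, whiskerRightIso_hom, Iso.symm_hom, Iso.symm_inv]
        rw [associator_naturality_left_assoc, ← whisker_exchange_assoc,
          rightUnitor_naturality]
        simp only [Category.assoc])
      )

/-- Tensoring on the left with an invertible object is an equivalence. -/
def lEquiv (L Y : M) (e1 : L ⊗ Y ≅ 𝟙_ M) (e2 : Y ⊗ L ≅ 𝟙_ M) : M ≌ M :=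
  CategoryTheory.Equivalence.mk (tensorLeft L) (tensorLeft Y)
    (NatIso.ofComponents
      (fun X => (λ_ X).symm ≪≫ (whiskerRightIso e2 X).symm ≪≫ α_ Y L X)
      (by
        intro X X' f
        dsimp
        simp only [whiskerLeftIso_hom, whiskerRightIso_hom, Iso.symm_hom, Iso.symm_inv]
        rw [leftUnitor_inv_naturality_assoc, whisker_exchange_assoc,
          associator_naturality_right]
        simp only [Category.assoc])
      )
    (NatIso.ofComponents
      (fun X => (α_ L Y X).symm ≪≫ whiskerRightIso e1 X ≪≫ λ_ X)
      (by
        intro X X' f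
        dsimp
        simp only [whiskerLeftIso_hom, whiskerRightIso_hom, Iso.symm_hom, Iso.symm_inv]
        rw [associator_inv_naturality_right_assoc, whisker_exchange_assoc,
          leftUnitor_naturality]
        simp only [Category.assoc])
      )

/-- `D L ≅ K ⊗ L⁻¹` for invertible `L`. -/
def dIsoTensor (L Y : M) (e1 : L ⊗ Y ≅ 𝟙_ M) (e2 : Y ⊗ L ≅ 𝟙_ M) :
    G.d L ≅ G.K ⊗ Y :=
  isoOfHomEquiv
    (fun Z => (G.homEquiv Z L).symm.trans ((rEquiv L Y e1 e2).toAdjunction.homEquiv Z G.K))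
    (by
      intro Z Z' f u
      erw [Equiv.trans_apply, Equiv.trans_apply, homEquiv_symm_natX]
      rw [show f ▷ L = (rEquiv L Y e1 e2).functor.map f from rfl]
      exact (rEquiv L Y e1 e2).toAdjunction.homEquiv_naturality_left f _)

/-- `D⁻¹ L ≅ L⁻¹ ⊗ K` for invertible `L`. -/
def dinvIsoTensor (L Y : M) (e1 : L ⊗ Y ≅ 𝟙_ M) (e2 : Y ⊗ L ≅ 𝟙_ M) :
    G.dinv L ≅ Y ⊗ G.K :=
  isoOfHomEquiv
    (fun Z => (G.homEquiv' L Z).symm.trans ((lEquiv L Y e1 e2).toAdjunction.homEquiv Z G.K))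
    (by
      intro Z Z' f u
      erw [Equiv.trans_apply, Equiv.trans_apply, homEquiv'_symm_natY]
      rw [show L ◁ f = (lEquiv L Y e1 e2).functor.map f from rfl]
      exact (lEquiv L Y e1 e2).toAdjunction.homEquiv_naturality_left f _)

/-- If `K'` is another dualizing object with duality `D'`, then
`D' X ≅ D (X ⊗ D⁻¹ K')` for every `X`. -/
def claimB (G' : GVCat M) (X : M) : G'.d X ≅ G.d (X ⊗ G.dinv G'.K) :=
  isoOfHomEquiv
    (fun Z =>
      (((G'.homEquiv Z X).symm.trans
        ((Iso.refl (Z ⊗ X)).homCongr (G.dDinv G'.K).symm)).trans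
        ((G.homEquiv (Z ⊗ X) (G.dinv G'.K)).symm.trans
          ((α_ Z X (G.dinv G'.K)).homCongr (Iso.refl G.K)))).trans
        (G.homEquiv Z (X ⊗ G.dinv G'.K)))
    (by
      intro Z Z' f u
      simp only [Equiv.trans_apply, Iso.homCongr_apply, Iso.refl_hom, Iso.refl_inv,
        Iso.symm_hom, Category.id_comp, Category.comp_id]
      rw [G'.homEquiv_symm_natX, Category.assoc, G.homEquiv_symm_natX]
      rw [← associator_inv_naturality_left_assoc, G.homEquiv_natX])

/-- If `K'` is another dualizing object with duality `D'`, then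
`D'⁻¹ X ≅ D⁻¹ (D K' ⊗ X)` for every `X`. -/
def claimC (G' : GVCat M) (X : M) : G'.dinv X ≅ G.dinv (G.d G'.K ⊗ X) :=
  isoOfHomEquiv
    (fun Z =>
      (((G'.homEquiv' X Z).symm.trans
        ((Iso.refl (X ⊗ Z)).homCongr (G.dinvD G'.K).symm)).trans
        ((G.homEquiv' (G.d G'.K) (X ⊗ Z)).symm.trans
          (((α_ (G.d G'.K) X Z).symm).homCongr (Iso.refl G.K)))).trans
        (G.homEquiv' (G.d G'.K ⊗ X) Z))
    (by
      intro Z Z' f u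
      simp only [Equiv.trans_apply, Iso.homCongr_apply, Iso.refl_hom, Iso.refl_inv,
        Iso.symm_hom, Iso.symm_inv, Category.id_comp, Category.comp_id]
      rw [G'.homEquiv'_symm_natY, Category.assoc, G.homEquiv'_symm_natY]
      rw [← associator_naturality_right_assoc, G.homEquiv'_natY])

/-- `D` reflects isomorphy. -/
def dReflect {A B : M} (i : G.d A ≅ G.d B) : A ≅ B :=
  (G.dinvD A).symm ≪≫ ((G.D.inverse.mapIso i).unop).symm ≪≫ G.dinvD B

/-- `D⁻¹` reflects isomorphy. -/
def dinvReflect {A B : M} (i : G.dinv A ≅ G.dinv B) : A ≅ B :=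
  (G.dDinv A).symm ≪≫ (G.D.functor.mapIso i.op).symm ≪≫ G.dDinv B

/-- `⊗ D⁻¹K'` reflects isomorphy. -/
def reflectR (G' : GVCat M) {X X' : M}
    (i : X ⊗ G.dinv G'.K ≅ X' ⊗ G.dinv G'.K) : X ≅ X' :=
  G'.dReflect ((G.claimB G' X) ≪≫ (G.D.functor.mapIso i.symm.op) ≪≫ (G.claimB G' X').symm)

/-- `D K' ⊗` reflects isomorphy. -/
def reflectL (G' : GVCat M) {U V : M}
    (i : G.d G'.K ⊗ U ≅ G.d G'.K ⊗ V) : U ≅ V :=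
  G'.dinvReflect ((G.claimC G' U) ≪≫ ((G.D.inverse.mapIso i).unop).symm ≪≫ (G.claimC G' V).symm)

/-- For any dualizing object `K'`, the object `D⁻¹ K'` is invertible. -/
lemma masterR (G' : GVCat M) :
    ∃ A : M, Nonempty (G.dinv G'.K ⊗ A ≅ 𝟙_ M) ∧ Nonempty (A ⊗ G.dinv G'.K ≅ 𝟙_ M) := by
  set L := G.dinv G'.K with hL
  set A := G'.dinv (G.d (𝟙_ M)) with hA
  have iAL : A ⊗ L ≅ 𝟙_ M :=
    G.dReflect ((G.claimB G' A).symm ≪≫ G'.dDinv (G.d (𝟙_ M)))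
  have iLA : L ⊗ A ≅ 𝟙_ M := by
    refine G.reflectR G' (X := L ⊗ A) (X' := 𝟙_ M) ?_
    exact α_ L A L ≪≫ whiskerLeftIso L iAL ≪≫ ρ_ L ≪≫ (λ_ L).symm
  exact ⟨A, ⟨iLA⟩, ⟨iAL⟩⟩

/-- For any dualizing object `K'`, the object `D K'` is invertible. -/
lemma masterL (G' : GVCat M) :
    ∃ B : M, Nonempty (G.d G'.K ⊗ B ≅ 𝟙_ M) ∧ Nonempty (B ⊗ G.d G'.K ≅ 𝟙_ M) := by
  set Md := G.d G'.K with hMd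
  set B := G'.d (G.dinv (𝟙_ M)) with hB
  have iMB : Md ⊗ B ≅ 𝟙_ M :=
    G.dinvReflect ((G.claimC G' B).symm ≪≫ G'.dinvD (G.dinv (𝟙_ M)))
  have iBM : B ⊗ Md ≅ 𝟙_ M := by
    refine G.reflectL G' (U := B ⊗ Md) (V := 𝟙_ M) ?_
    exact (α_ Md B Md).symm ≪≫ whiskerRightIso iMB Md ≪≫ λ_ Md ≪≫ (ρ_ Md).symm
  exact ⟨B, ⟨iMB⟩, ⟨iBM⟩⟩

/-- The Grothendieck–Verdier structure with dualizing object `D L`, `L` invertible. -/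
def gvD (L Y : M) (e1 : L ⊗ Y ≅ 𝟙_ M) (e2 : Y ⊗ L ≅ 𝟙_ M) : GVCat M where
  K := G.d L
  D := (rEquiv L Y e1 e2).op.trans G.D
  homEquiv X Z :=
    show (X ⊗ Z ⟶ G.d L) ≃ (X ⟶ G.d (Z ⊗ L)) from
    ((G.homEquiv (X ⊗ Z) L).symm.trans
      ((α_ X Z L).homCongr (Iso.refl G.K))).trans (G.homEquiv X (Z ⊗ L))
  homEquiv_natX := by
    intro X X' Z f h
    change (((G.homEquiv (X' ⊗ Z) L).symm.trans
        ((α_ X' Z L).homCongr (Iso.refl G.K))).trans (G.homEquiv X' (Z ⊗ L))) (f ▷ Z ≫ h) =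
      f ≫ (((G.homEquiv (X ⊗ Z) L).symm.trans
        ((α_ X Z L).homCongr (Iso.refl G.K))).trans (G.homEquiv X (Z ⊗ L))) h
    simp only [Equiv.trans_apply, Iso.homCongr_apply, Iso.refl_hom, Category.comp_id]
    rw [G.homEquiv_symm_natX, ← associator_inv_naturality_left_assoc, G.homEquiv_natX]
  homEquiv_natY := by
    intro X Z Z' g h
    change (((G.homEquiv (X ⊗ Z') L).symm.trans
        ((α_ X Z' L).homCongr (Iso.refl G.K))).trans (G.homEquiv X (Z' ⊗ L))) (X ◁ g ≫ h) =
      (((G.homEquiv (X ⊗ Z) L).symm.trans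
        ((α_ X Z L).homCongr (Iso.refl G.K))).trans (G.homEquiv X (Z ⊗ L))) h ≫ G.dmap (g ▷ L)
    simp only [Equiv.trans_apply, Iso.homCongr_apply, Iso.refl_hom, Category.comp_id]
    rw [G.homEquiv_symm_natX, ← associator_inv_naturality_middle_assoc, G.homEquiv_natY]

/-- The Grothendieck–Verdier structure with dualizing object `D⁻¹ L`, `L` invertible. -/
def gvDinv (L Y : M) (e1 : L ⊗ Y ≅ 𝟙_ M) (e2 : Y ⊗ L ≅ 𝟙_ M) : GVCat M where
  K := G.dinv L
  D := G.D.trans (lEquiv Y L e2 e1)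
  homEquiv X Z :=
    show (X ⊗ Z ⟶ G.dinv L) ≃ (X ⟶ Y ⊗ G.d Z) from
    (((G.homEquiv' L (X ⊗ Z)).symm.trans
      (((α_ L X Z).symm).homCongr (Iso.refl G.K))).trans
      (G.homEquiv (L ⊗ X) Z)).trans
      ((lEquiv L Y e1 e2).toAdjunction.homEquiv X (G.d Z))
  homEquiv_natX := by
    intro X X' Z f h
    change ((((G.homEquiv' L (X' ⊗ Z)).symm.trans
        (((α_ L X' Z).symm).homCongr (Iso.refl G.K))).trans
        (G.homEquiv (L ⊗ X') Z)).trans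
        ((lEquiv L Y e1 e2).toAdjunction.homEquiv X' (G.d Z))) (f ▷ Z ≫ h) =
      f ≫ ((((G.homEquiv' L (X ⊗ Z)).symm.trans
        (((α_ L X Z).symm).homCongr (Iso.refl G.K))).trans
        (G.homEquiv (L ⊗ X) Z)).trans
        ((lEquiv L Y e1 e2).toAdjunction.homEquiv X (G.d Z))) h
    erw [Equiv.trans_apply, Equiv.trans_apply, Equiv.trans_apply, Iso.homCongr_apply]
    conv_rhs => erw [Equiv.trans_apply, Equiv.trans_apply, Equiv.trans_apply, Iso.homCongr_apply]
    erw [Iso.refl_hom, Iso.symm_inv, Iso.symm_inv, Category.comp_id, Category.comp_id]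
    erw [G.homEquiv'_symm_natY, ← associator_naturality_middle_assoc, G.homEquiv_natX]
    exact (lEquiv L Y e1 e2).toAdjunction.homEquiv_naturality_left f _
  homEquiv_natY := by
    intro X Z Z' g h
    change ((((G.homEquiv' L (X ⊗ Z')).symm.trans
        (((α_ L X Z').symm).homCongr (Iso.refl G.K))).trans
        (G.homEquiv (L ⊗ X) Z')).trans
        ((lEquiv L Y e1 e2).toAdjunction.homEquiv X (G.d Z'))) (X ◁ g ≫ h) =
      ((((G.homEquiv' L (X ⊗ Z)).symm.trans
        (((α_ L X Z).symm).homCongr (Iso.refl G.K))).trans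
        (G.homEquiv (L ⊗ X) Z)).trans
        ((lEquiv L Y e1 e2).toAdjunction.homEquiv X (G.d Z))) h ≫
        (lEquiv L Y e1 e2).inverse.map (G.dmap g)
    erw [Equiv.trans_apply, Equiv.trans_apply, Equiv.trans_apply, Iso.homCongr_apply]
    conv_rhs => erw [Equiv.trans_apply, Equiv.trans_apply, Equiv.trans_apply, Iso.homCongr_apply]
    erw [Iso.refl_hom, Iso.symm_inv, Iso.symm_inv, Category.comp_id, Category.comp_id]
    erw [G.homEquiv'_symm_natY, ← associator_naturality_right_assoc, G.homEquiv_natY]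
    exact (lEquiv L Y e1 e2).toAdjunction.homEquiv_naturality_right _ _

end GVCat

/-- Let `(M, K)` be a Grothendieck–Verdier category with duality functor `D`.
(i) `L ↦ D L` maps invertible objects to dualizing objects, with `D L ≅ K ⊗ L⁻¹`, and every
dualizing object arises this way up to isomorphism (so `L ↦ D L` is an antiequivalence of the
corresponding full subcategories); (ii) likewise for `L ↦ D⁻¹ L`, with `D⁻¹ L ≅ L⁻¹ ⊗ K`;
(iii) if `L` is invertible then so is `D² L`, and `K ⊗ L⁻¹ ≅ (D² L)⁻¹ ⊗ K`. In particular a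
dualizing object is unique up to tensoring by an invertible object. -/
theorem stmt0 {M : Type u} [Category.{v} M] [MonoidalCategory M] (G : GVCat M) :
    (∀ L Y : M, (L ⊗ Y ≅ 𝟙_ M) → (Y ⊗ L ≅ 𝟙_ M) →
      IsDualizingObj (G.d L) ∧ Nonempty (G.d L ≅ G.K ⊗ Y)
      ∧ IsDualizingObj (G.dinv L) ∧ Nonempty (G.dinv L ≅ Y ⊗ G.K)
      ∧ TensorInvertible (G.dd L)
      ∧ (∀ Z : M, (G.dd L ⊗ Z ≅ 𝟙_ M) → (Z ⊗ G.dd L ≅ 𝟙_ M) →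
          Nonempty (G.K ⊗ Y ≅ Z ⊗ G.K)))
    ∧ (∀ K' : M, IsDualizingObj K' → ∃ L : M, TensorInvertible L ∧ Nonempty (K' ≅ G.d L))
    ∧ (∀ K' : M, IsDualizingObj K' → ∃ L : M, TensorInvertible L ∧ Nonempty (K' ≅ G.dinv L))
    ∧ (∀ K' : M, IsDualizingObj K' → ∃ L : M, TensorInvertible L ∧ Nonempty (K' ≅ G.K ⊗ L)) := by
  constructor
  · intro L Y h1 h2
    refine ⟨⟨G.gvD L Y h1 h2, rfl⟩, ⟨G.dIsoTensor L Y h1 h2⟩, ⟨G.gvDinv L Y h1 h2, rfl⟩,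
      ⟨G.dinvIsoTensor L Y h1 h2⟩, ?_, ?_⟩
    · exact G.masterL (G.gvD L Y h1 h2)
    · intro Z hz1 hz2
      exact ⟨(G.dIsoTensor L Y h1 h2).symm ≪≫ (G.dinvD (G.d L)).symm ≪≫
        G.dinvIsoTensor (G.dd L) Z hz1 hz2⟩
  refine ⟨?_, ?_, ?_⟩
  · rintro K' ⟨G', rfl⟩
    obtain ⟨A, hLA, hAL⟩ := G.masterR G'
    exact ⟨G.dinv G'.K, ⟨A, hLA, hAL⟩, ⟨(G.dDinv G'.K).symm⟩⟩
  · rintro K' ⟨G', rfl⟩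
    obtain ⟨B, hMB, hBM⟩ := G.masterL G'
    exact ⟨G.d G'.K, ⟨B, hMB, hBM⟩, ⟨(G.dinvD G'.K).symm⟩⟩
  · rintro K' ⟨G', rfl⟩
    obtain ⟨A, ⟨iLA⟩, ⟨iAL⟩⟩ := G.masterR G'
    exact ⟨A, ⟨G.dinv G'.K, ⟨iAL⟩, ⟨iLA⟩⟩,
      ⟨(G.dDinv G'.K).symm ≪≫ G.dIsoTensor (G.dinv G'.K) A iLA iAL⟩⟩
end

section
/- Let M be a monoidal category and K ∈ M a dualizing object. Then K is invertible if and only if K is rigid (i.e., K has both a left rigid dual and a right rigid dual). -/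
open CategoryTheory Opposite MonoidalCategory

universe v u

/-- `(B, ε)` is a right rigid dual of `A` (equivalently, `(A, ε)` is a left rigid dual
of `B`): there is `c : 𝟙 ⟶ B ⊗ A` satisfying the two triangle identities. -/
def IsRightRigidDual {M : Type u} [Category.{v} M] [MonoidalCategory M]
    (A B : M) (ε : A ⊗ B ⟶ 𝟙_ M) : Prop :=
  ∃ c : 𝟙_ M ⟶ B ⊗ A,
    (ρ_ A).inv ≫ (A ◁ c) ≫ (α_ A B A).inv ≫ (ε ▷ A) ≫ (λ_ A).hom = 𝟙 A ∧
    (λ_ B).inv ≫ (c ▷ B) ≫ (α_ B A B).hom ≫ (B ◁ ε) ≫ (ρ_ B).hom = 𝟙 B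


/-! ### Auxiliary machinery -/

section Aux

variable {M : Type u} [Category.{v} M] [MonoidalCategory M]

/-- A natural family of bijections between hom-sets into `P` and into `Q`
yields an isomorphism `P ≅ Q` (Yoneda). -/
def isoOfNatEquiv {P Q : M} (e : ∀ X : M, (X ⟶ P) ≃ (X ⟶ Q))
    (nat : ∀ {X X' : M} (f : X' ⟶ X) (g : X ⟶ P), e X' (f ≫ g) = f ≫ e X g) : P ≅ Q where
  hom := e P (𝟙 P)
  inv := (e Q).symm (𝟙 Q)
  hom_inv_id := by
    have nats : ∀ {X X' : M} (f : X' ⟶ X) (h : X ⟶ Q),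
        (e X').symm (f ≫ h) = f ≫ (e X).symm h := by
      intro X X' f h
      apply (e X').injective
      rw [Equiv.apply_symm_apply, nat, Equiv.apply_symm_apply]
    have h2 := nats (e P (𝟙 P)) (𝟙 Q)
    rw [Category.comp_id] at h2
    rw [← h2, Equiv.symm_apply_apply]
  inv_hom_id := by
    rw [← nat, Category.comp_id, Equiv.apply_symm_apply]

lemma whiskerLeft_cancel {P Q : M} (w : P ⊗ Q ≅ 𝟙_ M) {X X' : M} {f g : X ⟶ X'}
    (h : Q ◁ f = Q ◁ g) : f = g := by
  have e4 : ∀ t : X ⟶ X', (P ⊗ Q) ◁ t = (α_ P Q X).hom ≫ P ◁ (Q ◁ t) ≫ (α_ P Q X').inv := by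
    intro t; simp
  have h3 : P ◁ (Q ◁ f) = P ◁ (Q ◁ g) := by rw [h]
  have h2 : (P ⊗ Q) ◁ f = (P ⊗ Q) ◁ g := by rw [e4, e4, h3]
  calc f = (λ_ X).inv ≫ w.inv ▷ X ≫ ((P ⊗ Q) ◁ f ≫ w.hom ▷ X') ≫ (λ_ X').hom := by
        rw [whisker_exchange]; simp
    _ = (λ_ X).inv ≫ w.inv ▷ X ≫ ((P ⊗ Q) ◁ g ≫ w.hom ▷ X') ≫ (λ_ X').hom := by rw [h2]
    _ = g := by rw [whisker_exchange]; simp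

lemma whiskerRight_cancel {P Q : M} (w : Q ⊗ P ≅ 𝟙_ M) {X X' : M} {f g : X ⟶ X'}
    (h : f ▷ Q = g ▷ Q) : f = g := by
  have e4 : ∀ t : X ⟶ X', t ▷ (Q ⊗ P) = (α_ X Q P).inv ≫ (t ▷ Q) ▷ P ≫ (α_ X' Q P).hom := by
    intro t; simp
  have h3 : (f ▷ Q) ▷ P = (g ▷ Q) ▷ P := by rw [h]
  have h2 : f ▷ (Q ⊗ P) = g ▷ (Q ⊗ P) := by rw [e4, e4, h3]
  calc f = (ρ_ X).inv ≫ X ◁ w.inv ≫ (f ▷ (Q ⊗ P) ≫ X' ◁ w.hom) ≫ (ρ_ X').hom := by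
        rw [← whisker_exchange]; simp
    _ = (ρ_ X).inv ≫ X ◁ w.inv ≫ (g ▷ (Q ⊗ P) ≫ X' ◁ w.hom) ≫ (ρ_ X').hom := by rw [h2]
    _ = g := by rw [← whisker_exchange]; simp

/-- The "corrected" version of `hIso`: target of the coevaluation after one whiskering. -/
def snakeIso {L Y : M} (e' : Y ⊗ L ≅ 𝟙_ M) : Y ⊗ 𝟙_ M ≅ Y ⊗ (L ⊗ Y) :=
  ρ_ Y ≪≫ (λ_ Y).symm ≪≫ whiskerRightIso e'.symm Y ≪≫ α_ Y L Y

/-- The corrected coevaluation for an invertible object. -/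
def corrCoev {L Y : M} (e : L ⊗ Y ≅ 𝟙_ M) (e' : Y ⊗ L ≅ 𝟙_ M) : 𝟙_ M ≅ L ⊗ Y :=
  (λ_ (𝟙_ M)).symm ≪≫ whiskerRightIso e.symm (𝟙_ M) ≪≫ α_ L Y (𝟙_ M) ≪≫
    whiskerLeftIso L (snakeIso e') ≪≫ (α_ L Y (L ⊗ Y)).symm ≪≫ whiskerRightIso e (L ⊗ Y) ≪≫
    λ_ (L ⊗ Y)

lemma whiskerLeft_corrCoev {L Y : M} (e : L ⊗ Y ≅ 𝟙_ M) (e' : Y ⊗ L ≅ 𝟙_ M) :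
    Y ◁ (corrCoev e e').hom = (snakeIso e').hom := by
  apply whiskerLeft_cancel e'
  have natL : ∀ {P Q' : M} (t : P ⟶ Q'),
      L ◁ (Y ◁ t) ≫ (α_ L Y Q').inv ≫ e.hom ▷ Q' ≫ (λ_ Q').hom
        = (α_ L Y P).inv ≫ e.hom ▷ P ≫ (λ_ P).hom ≫ t := by
    intro P Q' t
    calc L ◁ (Y ◁ t) ≫ (α_ L Y Q').inv ≫ e.hom ▷ Q' ≫ (λ_ Q').hom
        = 𝟙 _ ⊗≫ (((L ⊗ Y) : M) ◁ t ≫ e.hom ▷ Q') ⊗≫ 𝟙 _ := by monoidal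
      _ = 𝟙 _ ⊗≫ (e.hom ▷ P ≫ 𝟙_ M ◁ t) ⊗≫ 𝟙 _ := by rw [whisker_exchange]
      _ = (α_ L Y P).inv ≫ e.hom ▷ P ≫ (λ_ P).hom ≫ t := by monoidal
  have h1 := natL (corrCoev e e').hom
  rw [← cancel_mono (α_ L Y (L ⊗ Y)).inv, ← cancel_mono (e.hom ▷ (L ⊗ Y)),
    ← cancel_mono ((λ_ (L ⊗ Y)).hom)]
  simp only [Category.assoc] at h1 ⊢
  rw [h1]
  simp [corrCoev]

lemma rightRigidDual_of_inverse {L Y : M} (e : L ⊗ Y ≅ 𝟙_ M) (e' : Y ⊗ L ≅ 𝟙_ M) :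
    IsRightRigidDual Y L e'.hom := by
  refine ⟨(corrCoev e e').hom, ?_, ?_⟩
  · rw [whiskerLeft_corrCoev e e']
    simp [snakeIso]
  · have T1' : Y ◁ (corrCoev e e').hom ≫ (α_ Y L Y).inv ≫ e'.hom ▷ Y
        = (ρ_ Y).hom ≫ (λ_ Y).inv := by
      rw [whiskerLeft_corrCoev e e']
      simp [snakeIso]
    apply whiskerRight_cancel e'
    rw [← cancel_epi (corrCoev e e').hom]
    calc (corrCoev e e').hom ≫
          ((λ_ L).inv ≫ (corrCoev e e').hom ▷ L ≫ (α_ L Y L).hom ≫ L ◁ e'.hom ≫ (ρ_ L).hom) ▷ Y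
        = 𝟙 _ ⊗≫ (𝟙_ M ◁ (corrCoev e e').hom ≫ (corrCoev e e').hom ▷ (L ⊗ Y)) ⊗≫
            L ◁ ((α_ Y L Y).inv ≫ e'.hom ▷ Y) ⊗≫ 𝟙 _ := by monoidal
      _ = 𝟙 _ ⊗≫ ((corrCoev e e').hom ▷ 𝟙_ M ≫ ((L ⊗ Y) : M) ◁ (corrCoev e e').hom) ⊗≫
            L ◁ ((α_ Y L Y).inv ≫ e'.hom ▷ Y) ⊗≫ 𝟙 _ := by rw [whisker_exchange]
      _ = (corrCoev e e').hom ⊗≫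
            L ◁ (Y ◁ (corrCoev e e').hom ≫ (α_ Y L Y).inv ≫ e'.hom ▷ Y) ⊗≫ 𝟙 _ := by monoidal
      _ = (corrCoev e e').hom ⊗≫ L ◁ ((ρ_ Y).hom ≫ (λ_ Y).inv) ⊗≫ 𝟙 _ := by rw [T1']
      _ = (corrCoev e e').hom ≫ 𝟙 L ▷ Y := by monoidal

end Aux

namespace GVCat

variable {M : Type u} [Category.{v} M] [MonoidalCategory M] (G : GVCat M)

/-- `D 𝟙 ≅ K`. -/
def dUnitIso : G.d (𝟙_ M) ≅ G.K :=
  isoOfNatEquiv (fun X => (G.homEquiv X (𝟙_ M)).symm.trans ((ρ_ X).homCongr (Iso.refl G.K)))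
    (by
      intro X X' f u
      simp only [Equiv.trans_apply, Iso.homCongr_apply, Iso.refl_hom, Category.comp_id]
      rw [G.homEquiv_symm_natX, rightUnitor_inv_naturality_assoc])

/-- `D⁻¹ 𝟙 ≅ K`. -/
def dinvUnitIso : G.dinv (𝟙_ M) ≅ G.K :=
  isoOfNatEquiv (fun Y => (G.homEquiv' (𝟙_ M) Y).symm.trans ((λ_ Y).homCongr (Iso.refl G.K)))
    (by
      intro Y Y' f u
      simp only [Equiv.trans_apply, Iso.homCongr_apply, Iso.refl_hom, Category.comp_id]
      have : (G.homEquiv' (𝟙_ M) Y').symm (f ≫ u) = 𝟙_ M ◁ f ≫ (G.homEquiv' (𝟙_ M) Y).symm u := by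
        apply (G.homEquiv' (𝟙_ M) Y').injective
        rw [Equiv.apply_symm_apply, G.homEquiv'_natY, Equiv.apply_symm_apply]
      rw [this, leftUnitor_inv_naturality_assoc])

/-- `D K ≅ 𝟙`. -/
def dKIso : G.d G.K ≅ 𝟙_ M :=
  G.D.functor.mapIso G.dinvUnitIso.op ≪≫ G.dDinv (𝟙_ M)

/-- `D⁻¹ K ≅ 𝟙`. -/
def dinvKIso : G.dinv G.K ≅ 𝟙_ M :=
  (G.D.inverse.mapIso G.dUnitIso).unop ≪≫ G.dinvD (𝟙_ M)

end GVCat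

/-- A dualizing object `K` of a monoidal category is invertible if and only
if it is rigid, i.e. has both a left rigid dual and a right rigid dual. -/
theorem stmt1 {M : Type u} [Category.{v} M] [MonoidalCategory M] (G : GVCat M) :
    TensorInvertible G.K ↔
      ((∃ (A : M) (ε : A ⊗ G.K ⟶ 𝟙_ M), IsRightRigidDual A G.K ε)
        ∧ (∃ (B : M) (ε : G.K ⊗ B ⟶ 𝟙_ M), IsRightRigidDual G.K B ε)) := by
  constructor
  · rintro ⟨Y, ⟨e⟩, ⟨e'⟩⟩
    exact ⟨⟨Y, e'.hom, rightRigidDual_of_inverse e e'⟩,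
      ⟨Y, e.hom, rightRigidDual_of_inverse e' e⟩⟩
  · rintro ⟨⟨A, εA, cA, TA1, TA2⟩, ⟨B, εB, cB, TB1, TB2⟩⟩
    -- turn the rigid-dual data into exact pairings
    haveI PA : ExactPairing G.K A :=
      { coevaluation' := cA
        evaluation' := εA
        coevaluation_evaluation' := by
          rw [← cancel_epi (ρ_ A).inv, ← cancel_mono (λ_ A).hom]
          simpa using TA1
        evaluation_coevaluation' := by
          rw [← cancel_epi (λ_ G.K).inv, ← cancel_mono (ρ_ G.K).hom]
          simpa using TA2 }
    haveI PB : ExactPairing B G.K :=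
      { coevaluation' := cB
        evaluation' := εB
        coevaluation_evaluation' := by
          rw [← cancel_epi (ρ_ G.K).inv, ← cancel_mono (λ_ G.K).hom]
          simpa using TB1
        evaluation_coevaluation' := by
          rw [← cancel_epi (λ_ B).inv, ← cancel_mono (ρ_ B).hom]
          simpa using TB2 }
    -- `K ⊗ A ≅ 𝟙` since both represent `X ↦ Hom(X ⊗ K, K) ≅ Hom(X, D K) ≅ Hom(X, 𝟙)`
    have isoKA : G.K ⊗ A ≅ 𝟙_ M :=
      isoOfNatEquiv
        (fun X => ((tensorRightHomEquiv X G.K A G.K).symm.trans (G.homEquiv X G.K)).trans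
          ((Iso.refl X).homCongr G.dKIso))
        (by
          intro X X' f g
          simp only [Equiv.trans_apply, Iso.homCongr_apply, Iso.refl_inv, Category.assoc]
          rw [tensorRightHomEquiv_symm_naturality, G.homEquiv_natX]
          simp)
    -- `B ⊗ K ≅ 𝟙` since both represent `Y ↦ Hom(K ⊗ Y, K) ≅ Hom(Y, D⁻¹ K) ≅ Hom(Y, 𝟙)`
    have isoBK : B ⊗ G.K ≅ 𝟙_ M :=
      isoOfNatEquiv
        (fun Y => ((tensorLeftHomEquiv Y B G.K G.K).symm.trans (G.homEquiv' G.K Y)).trans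
          ((Iso.refl Y).homCongr G.dinvKIso))
        (by
          intro Y Y' f g
          simp only [Equiv.trans_apply, Iso.homCongr_apply, Iso.refl_inv, Category.assoc]
          rw [tensorLeftHomEquiv_symm_naturality, G.homEquiv'_natY]
          simp)
    -- hence `A ≅ B`, and `K` is invertible with inverse `A`
    have isoAB : A ≅ B :=
      (λ_ A).symm ≪≫ whiskerRightIso isoBK.symm A ≪≫ α_ B G.K A ≪≫
        whiskerLeftIso B isoKA ≪≫ ρ_ B
    exact ⟨A, ⟨isoKA⟩, ⟨whiskerRightIso isoAB G.K ≪≫ isoBK⟩⟩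
end

section
/- Let (M, K) be a Grothendieck–Verdier category with duality functor D, and let e ∈ M be a closed idempotent such that D²e ≅ e. Then De is a dualizing object of the monoidal category eMe, so (eMe, De) is a Grothendieck–Verdier category. Moreover D(eMe) = eMe, and the duality functor of (eMe, De) is isomorphic to the restriction of D to eMe. -/
open CategoryTheory Opposite MonoidalCategory

universe v u

/-- Membership in the Hecke subcategory `eMe` determined by a closed idempotent `e`:
`X ≅ e ⊗ Y ⊗ e` for some `Y`. -/
def InHecke {M : Type u} [Category.{v} M] [MonoidalCategory M] (e X : M) : Prop :=
  ∃ Y : M, Nonempty (X ≅ (e ⊗ Y) ⊗ e)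


/-! ### Auxiliary machinery for the proof of `stmt2` -/

namespace Stmt2Aux

open GVCat

variable {M : Type u} [Category.{v} M] [MonoidalCategory M]

section Idem

variable (e : M) (π : 𝟙_ M ⟶ e)

/-- The canonical map `B ⟶ e ⊗ B`. -/
def lm (B : M) : B ⟶ e ⊗ B := (λ_ B).inv ≫ π ▷ B

/-- The canonical map `B ⟶ B ⊗ e`. -/
def rm (B : M) : B ⟶ B ⊗ e := (ρ_ B).inv ≫ B ◁ π

lemma lm_nat {A B : M} (f : A ⟶ B) : f ≫ lm e π B = lm e π A ≫ e ◁ f := by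
  simp [lm, ← whisker_exchange]
lemma rm_nat {A B : M} (f : A ⟶ B) : f ≫ rm e π B = rm e π A ≫ f ▷ e := by
  simp [rm, whisker_exchange]
lemma lm_tensor (A B : M) : lm e π (A ⊗ B) = lm e π A ▷ B ≫ (α_ e A B).hom := by
  rw [lm, leftUnitor_tensor_inv, Category.assoc, ← associator_naturality_left]
  simp [lm, comp_whiskerRight]
lemma rm_tensor (A B : M) : rm e π (A ⊗ B) = A ◁ rm e π B ≫ (α_ A B e).inv := by
  rw [rm, rightUnitor_tensor_inv, Category.assoc, ← associator_inv_naturality_right]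
  simp [rm, MonoidalCategory.whiskerLeft_comp]
lemma rm_whiskerRight (A B : M) : rm e π A ▷ B = A ◁ lm e π B ≫ (α_ A e B).inv := by
  simp [rm, lm, comp_whiskerRight, ← associator_inv_naturality_middle]
lemma whiskerLeft_lm (B A : M) : B ◁ lm e π A = rm e π B ▷ A ≫ (α_ B e A).hom := by
  rw [rm_whiskerRight]; simp

lemma isIso_lm_e (hπ₁ : IsIso (π ▷ e)) : IsIso (lm e π e) := by
  haveI := hπ₁; rw [lm]; infer_instance
lemma isIso_rm_e (hπ₂ : IsIso (e ◁ π)) : IsIso (rm e π e) := by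
  haveI := hπ₂; rw [rm]; infer_instance

lemma lm_eq_rm (hπ₁ : IsIso (π ▷ e)) (hπ₂ : IsIso (e ◁ π)) : lm e π e = rm e π e := by
  have h1 : π ≫ lm e π e = π ≫ rm e π e := by
    rw [lm, rm, ← Category.assoc, ← Category.assoc, leftUnitor_inv_naturality,
      rightUnitor_inv_naturality, unitors_inv_equal, Category.assoc, Category.assoc,
      whisker_exchange]
  have h2 : lm e π e ▷ e = rm e π e ▷ e := by
    haveI := hπ₁
    have := congrArg (· ▷ e) h1
    simpa only [comp_whiskerRight, cancel_epi] using this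
  haveI : IsIso (rm e π (e ⊗ e)) := by
    haveI := hπ₂; haveI := isIso_rm_e e π hπ₂
    rw [rm_tensor]; infer_instance
  have h4 : lm e π e ≫ rm e π (e ⊗ e) = rm e π e ≫ rm e π (e ⊗ e) := by
    rw [rm_nat e π (lm e π e), rm_nat e π (rm e π e), h2]
  exact (cancel_mono (rm e π (e ⊗ e))).1 h4

lemma lm_tensor_e (hπ₁ : IsIso (π ▷ e)) (hπ₂ : IsIso (e ◁ π)) (B : M) :
    lm e π (e ⊗ B) = e ◁ lm e π B := by
  rw [lm_tensor, lm_eq_rm e π hπ₁ hπ₂, whiskerLeft_lm]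
lemma rm_tensor_e (hπ₁ : IsIso (π ▷ e)) (hπ₂ : IsIso (e ◁ π)) (B : M) :
    rm e π (B ⊗ e) = rm e π B ▷ e := by
  rw [rm_tensor, ← lm_eq_rm e π hπ₁ hπ₂, rm_whiskerRight]

/-- `Hom(e ⊗ B, W) ≃ Hom(B, W)` when `lm W` is invertible. -/
noncomputable def lmEquiv (hπ₁ : IsIso (π ▷ e)) (hπ₂ : IsIso (e ◁ π)) {W : M}
    (hW : IsIso (lm e π W)) (B : M) : (e ⊗ B ⟶ W) ≃ (B ⟶ W) where
  toFun t := lm e π B ≫ t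
  invFun s := e ◁ s ≫ inv (lm e π W)
  left_inv t := by
    dsimp only
    rw [MonoidalCategory.whiskerLeft_comp, ← lm_tensor_e e π hπ₁ hπ₂,
      ← lm_nat, Category.assoc, IsIso.hom_inv_id, Category.comp_id]
  right_inv s := by
    dsimp only
    rw [← Category.assoc, ← lm_nat, Category.assoc, IsIso.hom_inv_id, Category.comp_id]

/-- `Hom(B ⊗ e, W) ≃ Hom(B, W)` when `rm W` is invertible. -/
noncomputable def rmEquiv (hπ₁ : IsIso (π ▷ e)) (hπ₂ : IsIso (e ◁ π)) {W : M}
    (hW : IsIso (rm e π W)) (B : M) : (B ⊗ e ⟶ W) ≃ (B ⟶ W) where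
  toFun t := rm e π B ≫ t
  invFun s := s ▷ e ≫ inv (rm e π W)
  left_inv t := by
    dsimp only
    rw [comp_whiskerRight, ← rm_tensor_e e π hπ₁ hπ₂,
      ← rm_nat, Category.assoc, IsIso.hom_inv_id, Category.comp_id]
  right_inv s := by
    dsimp only
    rw [← Category.assoc, ← rm_nat, Category.assoc, IsIso.hom_inv_id, Category.comp_id]

lemma lmEquiv_nat (hπ₁ : IsIso (π ▷ e)) (hπ₂ : IsIso (e ◁ π)) {W : M} (hW : IsIso (lm e π W))
    {B B' : M} (b : B' ⟶ B) (t : e ⊗ B ⟶ W) :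
    lmEquiv e π hπ₁ hπ₂ hW B' (e ◁ b ≫ t) = b ≫ lmEquiv e π hπ₁ hπ₂ hW B t := by
  simp only [lmEquiv, Equiv.coe_fn_mk, ← Category.assoc, lm_nat]

lemma rmEquiv_nat (hπ₁ : IsIso (π ▷ e)) (hπ₂ : IsIso (e ◁ π)) {W : M} (hW : IsIso (rm e π W))
    {B B' : M} (b : B' ⟶ B) (t : B ⊗ e ⟶ W) :
    rmEquiv e π hπ₁ hπ₂ hW B' (b ▷ e ≫ t) = b ≫ rmEquiv e π hπ₁ hπ₂ hW B t := by
  simp only [rmEquiv, Equiv.coe_fn_mk, ← Category.assoc, rm_nat]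

lemma isIso_lm_of_iso {A B : M} (i : A ≅ B) (h : IsIso (lm e π B)) : IsIso (lm e π A) := by
  have : lm e π A = i.hom ≫ lm e π B ≫ e ◁ i.inv := by
    rw [← Category.assoc, lm_nat e π i.hom, Category.assoc, ← MonoidalCategory.whiskerLeft_comp]
    simp
  rw [this]; infer_instance

lemma isIso_rm_of_iso {A B : M} (i : A ≅ B) (h : IsIso (rm e π B)) : IsIso (rm e π A) := by
  have : rm e π A = i.hom ≫ rm e π B ≫ i.inv ▷ e := by
    rw [← Category.assoc, rm_nat e π i.hom, Category.assoc, ← comp_whiskerRight]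
    simp
  rw [this]; infer_instance

lemma good_of_inHecke (hπ₁ : IsIso (π ▷ e)) (hπ₂ : IsIso (e ◁ π)) {X : M}
    (hX : InHecke e X) : IsIso (lm e π X) ∧ IsIso (rm e π X) := by
  obtain ⟨Z, ⟨i⟩⟩ := hX
  constructor
  · refine isIso_lm_of_iso e π i ?_
    haveI : IsIso (lm e π (e ⊗ Z)) := by
      haveI := isIso_lm_e e π hπ₁; rw [lm_tensor]; infer_instance
    rw [lm_tensor]; infer_instance
  · refine isIso_rm_of_iso e π i ?_
    haveI := isIso_rm_e e π hπ₂
    rw [rm_tensor]; infer_instance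

end Idem

section YonedaTools

lemma isIso_of_postcomp_bij {A B : M} (f : A ⟶ B)
    (H : ∀ C : M, Function.Bijective fun t : C ⟶ A => t ≫ f) : IsIso f := by
  obtain ⟨g, hg⟩ := (H B).2 (𝟙 B)
  have hg' : g ≫ f = 𝟙 B := hg
  have h2 : (fun t : A ⟶ A => t ≫ f) (f ≫ g) = (fun t : A ⟶ A => t ≫ f) (𝟙 A) := by
    dsimp only
    rw [Category.assoc, hg', Category.comp_id, Category.id_comp]
  exact ⟨⟨g, (H A).1 h2, hg'⟩⟩

/-- Precomposition with the inverse of an isomorphism, as an equivalence. -/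
def precompEquiv {A B : M} (i : A ≅ B) (C : M) : (A ⟶ C) ≃ (B ⟶ C) where
  toFun f := i.inv ≫ f
  invFun f := i.hom ≫ f
  left_inv f := by simp
  right_inv f := by simp

/-- Postcomposition with an isomorphism, as an equivalence. -/
def postcompEquiv {C D : M} (i : C ≅ D) (A : M) : (A ⟶ C) ≃ (A ⟶ D) where
  toFun f := f ≫ i.hom
  invFun f := f ≫ i.inv
  left_inv f := by simp
  right_inv f := by simp

end YonedaTools

section GV

variable (G : GVCat M)

lemma homEquiv_symm_natX {X X' : M} (Y : M) (f : X' ⟶ X) (k : X ⟶ G.d Y) :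
    (G.homEquiv X' Y).symm (f ≫ k) = f ▷ Y ≫ (G.homEquiv X Y).symm k := by
  apply (G.homEquiv X' Y).injective
  rw [Equiv.apply_symm_apply, G.homEquiv_natX, Equiv.apply_symm_apply]

lemma homEquiv'_natY (X : M) {Y Y' : M} (g : Y' ⟶ Y) (h : X ⊗ Y ⟶ G.K) :
    G.homEquiv' X Y' (X ◁ g ≫ h) = g ≫ G.homEquiv' X Y h := by
  have e1 : G.homEquiv X Y' (X ◁ g ≫ h) = G.homEquiv X Y h ≫ G.D.functor.map g.op :=
    G.homEquiv_natY X g h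
  calc G.homEquiv' X Y' (X ◁ g ≫ h)
      = ((G.D.symm.toAdjunction.homEquiv X (op Y')).symm
          (G.homEquiv X Y' (X ◁ g ≫ h))).unop := rfl
    _ = ((G.D.symm.toAdjunction.homEquiv X (op Y')).symm
          (G.homEquiv X Y h ≫ G.D.functor.map g.op)).unop := by rw [e1]
    _ = ((G.D.symm.toAdjunction.homEquiv X (op Y)).symm
          (G.homEquiv X Y h) ≫ g.op).unop :=
        congrArg Quiver.Hom.unop
          (G.D.symm.toAdjunction.homEquiv_naturality_right_symm (G.homEquiv X Y h) g.op)
    _ = g ≫ G.homEquiv' X Y h := rfl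

lemma homEquiv'_natX {X X' : M} (Y : M) (f : X' ⟶ X) (h : X ⊗ Y ⟶ G.K) :
    G.homEquiv' X' Y (f ▷ Y ≫ h) = G.homEquiv' X Y h ≫ G.dinvmap f := by
  have e1 : G.homEquiv X' Y (f ▷ Y ≫ h) = f ≫ G.homEquiv X Y h := G.homEquiv_natX Y f h
  calc G.homEquiv' X' Y (f ▷ Y ≫ h)
      = ((G.D.symm.toAdjunction.homEquiv X' (op Y)).symm
          (G.homEquiv X' Y (f ▷ Y ≫ h))).unop := rfl
    _ = ((G.D.symm.toAdjunction.homEquiv X' (op Y)).symm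
          (f ≫ G.homEquiv X Y h)).unop := by rw [e1]
    _ = (G.D.inverse.map f ≫ (G.D.symm.toAdjunction.homEquiv X (op Y)).symm
          (G.homEquiv X Y h)).unop :=
        congrArg Quiver.Hom.unop
          (G.D.symm.toAdjunction.homEquiv_naturality_left_symm f (G.homEquiv X Y h))
    _ = G.homEquiv' X Y h ≫ G.dinvmap f := rfl

lemma homEquiv'_symm_natY (X : M) {Y Y' : M} (g : Y' ⟶ Y) (s : Y ⟶ G.dinv X) :
    (G.homEquiv' X Y').symm (g ≫ s) = X ◁ g ≫ (G.homEquiv' X Y).symm s := by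
  apply (G.homEquiv' X Y').injective
  rw [Equiv.apply_symm_apply, homEquiv'_natY, Equiv.apply_symm_apply]

lemma isIso_of_dmap {A B : M} (f : A ⟶ B) (h : IsIso (G.dmap f)) : IsIso f := by
  haveI : IsIso (G.D.functor.map f.op) := h
  haveI : IsIso f.op := isIso_of_reflects_iso f.op G.D.functor
  exact isIso_of_op f

lemma isIso_of_dinvmap {A B : M} (f : A ⟶ B) (h : IsIso (G.dinvmap f)) : IsIso f := by
  haveI : IsIso ((G.D.inverse.map f).unop) := h
  haveI : IsIso (G.D.inverse.map f) := (isIso_unop_iff _).1 this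
  exact isIso_of_reflects_iso f G.D.inverse

/-- The image of an isomorphism under the duality functor. -/
noncomputable def dmapIso {A B : M} (f : A ⟶ B) (hf : IsIso f) : G.d B ≅ G.d A :=
  G.D.functor.mapIso (Iso.op (@asIso _ _ _ _ f hf))

lemma dmapIso_hom {A B : M} (f : A ⟶ B) (hf : IsIso f) : (dmapIso G f hf).hom = G.dmap f := rfl

end GV

section Main

variable (G : GVCat M) (e : M) (π : 𝟙_ M ⟶ e)

/-- If `X` is in the Hecke category, then `D X ⟶ D X ⊗ e` is invertible. -/
lemma isIso_rm_d (hπ₁ : IsIso (π ▷ e)) (hπ₂ : IsIso (e ◁ π)) {X : M}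
    (hlX : IsIso (lm e π X)) : IsIso (rm e π (G.d X)) := by
  have hl' : IsIso (lm e π (G.dinv (G.d X))) := isIso_lm_of_iso e π (G.dinvD X) hlX
  apply isIso_of_dinvmap G
  apply isIso_of_postcomp_bij
  intro B
  have key : ∀ t : B ⟶ G.dinv (G.d X ⊗ e),
      t ≫ G.dinvmap (rm e π (G.d X)) =
      (lmEquiv e π hπ₁ hπ₂ hl' B) ((G.homEquiv' (G.d X) (e ⊗ B))
        ((precompEquiv (α_ (G.d X) e B) G.K) ((G.homEquiv' (G.d X ⊗ e) B).symm t))) := by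
    intro t
    calc t ≫ G.dinvmap (rm e π (G.d X))
        = G.homEquiv' (G.d X ⊗ e) B ((G.homEquiv' (G.d X ⊗ e) B).symm t)
            ≫ G.dinvmap (rm e π (G.d X)) := by rw [Equiv.apply_symm_apply]
      _ = G.homEquiv' (G.d X) B
            (rm e π (G.d X) ▷ B ≫ (G.homEquiv' (G.d X ⊗ e) B).symm t) :=
          (homEquiv'_natX G B (rm e π (G.d X)) _).symm
      _ = G.homEquiv' (G.d X) B
            (G.d X ◁ lm e π B ≫ ((α_ (G.d X) e B).inv ≫ (G.homEquiv' (G.d X ⊗ e) B).symm t)) := by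
          rw [rm_whiskerRight]; simp only [Category.assoc]
      _ = lm e π B ≫ G.homEquiv' (G.d X) (e ⊗ B)
            ((α_ (G.d X) e B).inv ≫ (G.homEquiv' (G.d X ⊗ e) B).symm t) :=
          homEquiv'_natY G (G.d X) (lm e π B) _
      _ = (lmEquiv e π hπ₁ hπ₂ hl' B) ((G.homEquiv' (G.d X) (e ⊗ B))
            ((precompEquiv (α_ (G.d X) e B) G.K) ((G.homEquiv' (G.d X ⊗ e) B).symm t))) := rfl
  rw [funext key]
  exact (lmEquiv e π hπ₁ hπ₂ hl' B).bijective.comp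
    ((G.homEquiv' (G.d X) (e ⊗ B)).bijective.comp
      ((precompEquiv (α_ (G.d X) e B) G.K).bijective.comp
        (G.homEquiv' (G.d X ⊗ e) B).symm.bijective))

/-- If `X` is in the Hecke category, then `D⁻¹ X ⟶ e ⊗ D⁻¹ X` is invertible. -/
lemma isIso_lm_dinv (hπ₁ : IsIso (π ▷ e)) (hπ₂ : IsIso (e ◁ π)) {X : M}
    (hrX : IsIso (rm e π X)) : IsIso (lm e π (G.dinv X)) := by
  have hr' : IsIso (rm e π (G.d (G.dinv X))) := isIso_rm_of_iso e π (G.dDinv X) hrX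
  apply isIso_of_dmap G
  apply isIso_of_postcomp_bij
  intro C
  have key : ∀ t : C ⟶ G.d (e ⊗ G.dinv X),
      t ≫ G.dmap (lm e π (G.dinv X)) =
      (rmEquiv e π hπ₁ hπ₂ hr' C) ((G.homEquiv (C ⊗ e) (G.dinv X))
        ((precompEquiv (α_ C e (G.dinv X)).symm G.K)
          ((G.homEquiv C (e ⊗ G.dinv X)).symm t))) := by
    intro t
    calc t ≫ G.dmap (lm e π (G.dinv X))
        = G.homEquiv C (e ⊗ G.dinv X) ((G.homEquiv C (e ⊗ G.dinv X)).symm t)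
            ≫ G.dmap (lm e π (G.dinv X)) := by rw [Equiv.apply_symm_apply]
      _ = G.homEquiv C (G.dinv X)
            (C ◁ lm e π (G.dinv X) ≫ (G.homEquiv C (e ⊗ G.dinv X)).symm t) :=
          (G.homEquiv_natY C (lm e π (G.dinv X)) _).symm
      _ = G.homEquiv C (G.dinv X)
            (rm e π C ▷ G.dinv X ≫ ((α_ C e (G.dinv X)).hom
              ≫ (G.homEquiv C (e ⊗ G.dinv X)).symm t)) := by
          rw [whiskerLeft_lm]; simp only [Category.assoc]
      _ = rm e π C ≫ G.homEquiv (C ⊗ e) (G.dinv X)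
            ((α_ C e (G.dinv X)).hom ≫ (G.homEquiv C (e ⊗ G.dinv X)).symm t) :=
          G.homEquiv_natX (G.dinv X) (rm e π C) _
      _ = (rmEquiv e π hπ₁ hπ₂ hr' C) ((G.homEquiv (C ⊗ e) (G.dinv X))
            ((precompEquiv (α_ C e (G.dinv X)).symm G.K)
              ((G.homEquiv C (e ⊗ G.dinv X)).symm t))) := rfl
  rw [funext key]
  exact (rmEquiv e π hπ₁ hπ₂ hr' C).bijective.comp
    ((G.homEquiv (C ⊗ e) (G.dinv X)).bijective.comp
      ((precompEquiv (α_ C e (G.dinv X)).symm G.K).bijective.comp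
        (G.homEquiv C (e ⊗ G.dinv X)).symm.bijective))

/-- For `X` in the Hecke category, `D X ≅ e ⊗ D X`. -/
lemma d_iso_left (hπ₁ : IsIso (π ▷ e)) (hπ₂ : IsIso (e ◁ π)) (j : G.dinv e ≅ G.d e) {X : M}
    (hrX : IsIso (rm e π X)) : Nonempty (G.d X ≅ e ⊗ G.d X) := by
  let Φ : ∀ B : M, (B ⟶ G.dinv (e ⊗ G.d X)) ≃ (B ⟶ X) := fun B =>
    ((G.homEquiv' (e ⊗ G.d X) B).symm.trans
    ((precompEquiv (α_ e (G.d X) B) G.K).trans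
    ((G.homEquiv' e (G.d X ⊗ B)).trans
    ((postcompEquiv j (G.d X ⊗ B)).trans
    ((G.homEquiv (G.d X ⊗ B) e).symm.trans
    ((precompEquiv (α_ (G.d X) B e) G.K).trans
    ((G.homEquiv' (G.d X) (B ⊗ e)).trans
    ((postcompEquiv (G.dinvD X) (B ⊗ e)).trans
    (rmEquiv e π hπ₁ hπ₂ hrX B)))))))))
  have nat : ∀ {B B' : M} (b : B' ⟶ B) (s : B ⟶ G.dinv (e ⊗ G.d X)),
      Φ B' (b ≫ s) = b ≫ Φ B s := by
    intro B B' b s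
    show (rmEquiv e π hπ₁ hπ₂ hrX B') _ = b ≫ (rmEquiv e π hπ₁ hπ₂ hrX B) _
    simp only [Φ, Equiv.trans_apply, precompEquiv, postcompEquiv, Equiv.coe_fn_mk]
    rw [homEquiv'_symm_natY G (e ⊗ G.d X) b s,
      ← associator_inv_naturality_right_assoc,
      homEquiv'_natY G e (G.d X ◁ b), Category.assoc,
      homEquiv_symm_natX G e (G.d X ◁ b),
      ← associator_inv_naturality_middle_assoc,
      homEquiv'_natY G (G.d X) (b ▷ e), Category.assoc,
      rmEquiv_nat e π hπ₁ hπ₂ hrX b]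
  let ψ : G.dinv (e ⊗ G.d X) ≅ X :=
    Yoneda.ext (G.dinv (e ⊗ G.d X)) X
      (fun {B} s => Φ B s) (fun {B} s => (Φ B).symm s)
      (fun {B} s => Equiv.symm_apply_apply (Φ B) s)
      (fun {B} s => Equiv.apply_symm_apply (Φ B) s)
      nat
  exact ⟨G.D.functor.mapIso ψ.op ≪≫ G.dDinv (e ⊗ G.d X)⟩

/-- For `X` in the Hecke category, `D⁻¹ X ≅ D⁻¹ X ⊗ e`. -/
lemma dinv_iso_right (hπ₁ : IsIso (π ▷ e)) (hπ₂ : IsIso (e ◁ π)) (j : G.dinv e ≅ G.d e) {X : M}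
    (hlX : IsIso (lm e π X)) : Nonempty (G.dinv X ≅ G.dinv X ⊗ e) := by
  have hldZ : IsIso (lm e π (G.d (G.dinv X))) := isIso_lm_of_iso e π (G.dDinv X) hlX
  let Φ : ∀ A : M, (A ⟶ G.d (G.dinv X ⊗ e)) ≃ (A ⟶ G.d (G.dinv X)) := fun A =>
    ((G.homEquiv A (G.dinv X ⊗ e)).symm.trans
    ((precompEquiv (α_ A (G.dinv X) e).symm G.K).trans
    ((G.homEquiv (A ⊗ G.dinv X) e).trans
    ((postcompEquiv j.symm (A ⊗ G.dinv X)).trans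
    ((G.homEquiv' e (A ⊗ G.dinv X)).symm.trans
    ((precompEquiv (α_ e A (G.dinv X)).symm G.K).trans
    ((G.homEquiv (e ⊗ A) (G.dinv X)).trans
    (lmEquiv e π hπ₁ hπ₂ hldZ A))))))))
  have nat : ∀ {A A' : M} (a : A' ⟶ A) (s : A ⟶ G.d (G.dinv X ⊗ e)),
      Φ A' (a ≫ s) = a ≫ Φ A s := by
    intro A A' a s
    show (lmEquiv e π hπ₁ hπ₂ hldZ A') _ = a ≫ (lmEquiv e π hπ₁ hπ₂ hldZ A) _
    simp only [Φ, Equiv.trans_apply, precompEquiv, postcompEquiv, Equiv.coe_fn_mk,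
      Iso.symm_hom, Iso.symm_inv]
    rw [homEquiv_symm_natX G (G.dinv X ⊗ e) a,
      ← associator_naturality_left_assoc,
      G.homEquiv_natX e (a ▷ G.dinv X), Category.assoc,
      homEquiv'_symm_natY G e (a ▷ G.dinv X),
      ← associator_naturality_middle_assoc,
      G.homEquiv_natX (G.dinv X) (e ◁ a),
      lmEquiv_nat e π hπ₁ hπ₂ hldZ a]
  let ψ : G.d (G.dinv X ⊗ e) ≅ G.d (G.dinv X) :=
    Yoneda.ext (G.d (G.dinv X ⊗ e)) (G.d (G.dinv X))
      (fun {A} s => Φ A s) (fun {A} s => (Φ A).symm s)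
      (fun {A} s => Equiv.symm_apply_apply (Φ A) s)
      (fun {A} s => Equiv.apply_symm_apply (Φ A) s)
      nat
  exact ⟨(G.dinvD (G.dinv X)).symm ≪≫ (G.D.inverse.mapIso ψ).unop ≪≫ G.dinvD (G.dinv X ⊗ e)⟩

end Main

end Stmt2Aux

/-- Let `(M, K)` be a Grothendieck–Verdier category, `π : 𝟙 ⟶ e` an
idempotent arrow (both `π ▷ e` and `e ◁ π` are isomorphisms), and suppose `D² e ≅ e`.
Then `D e` is a dualizing object of the Hecke subcategory `eMe`: `D` maps `eMe` onto `eMe`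
(up to isomorphism), and for `X, Y ∈ eMe` there are bijections
`Hom(X ⊗ Y, D e) ≃ Hom(X, D Y)` natural in `X` and `Y`; i.e. `(eMe, D e)` is a
Grothendieck–Verdier category whose duality functor is the restriction of `D`. -/
theorem stmt2 {M : Type u} [Category.{v} M] [MonoidalCategory M] (G : GVCat M)
    (e : M) (π : 𝟙_ M ⟶ e)
    (hπ₁ : IsIso (π ▷ e)) (hπ₂ : IsIso (e ◁ π))
    (he : Nonempty (G.dd e ≅ e)) :
    (∀ X : M, InHecke e X → InHecke e (G.d X))
    ∧ (∀ X : M, InHecke e X → ∃ Z : M, InHecke e Z ∧ Nonempty (G.d Z ≅ X))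
    ∧ (∃ eq : ∀ X Y : M, InHecke e X → InHecke e Y →
          ((X ⊗ Y ⟶ G.d e) ≃ (X ⟶ G.d Y)),
        (∀ (X X' Y : M) (hX : InHecke e X) (hX' : InHecke e X') (hY : InHecke e Y)
            (f : X' ⟶ X) (h : X ⊗ Y ⟶ G.d e),
          eq X' Y hX' hY (f ▷ Y ≫ h) = f ≫ eq X Y hX hY h)
        ∧ (∀ (X Y Y' : M) (hX : InHecke e X) (hY : InHecke e Y) (hY' : InHecke e Y')
            (q : Y' ⟶ Y) (h : X ⊗ Y ⟶ G.d e),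
          eq X Y' hX hY' (X ◁ q ≫ h) = eq X Y hX hY h ≫ G.dmap q)) := by
  classical
  open Stmt2Aux in
  obtain ⟨φ⟩ := he
  -- the comparison isomorphism `D⁻¹ e ≅ D e`
  let j : G.dinv e ≅ G.d e := (G.D.inverse.mapIso φ).unop ≪≫ G.dinvD (G.d e)
  refine ⟨?_, ?_, ?_⟩
  · -- `D` maps `eMe` into `eMe`
    intro X hX
    obtain ⟨hlX, hrX⟩ := good_of_inHecke e π hπ₁ hπ₂ hX
    have hrd : IsIso (rm e π (G.d X)) := isIso_rm_d G e π hπ₁ hπ₂ hlX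
    obtain ⟨σ⟩ := d_iso_left G e π hπ₁ hπ₂ j hrX
    exact ⟨G.d X, ⟨asIso (rm e π (G.d X)) ≪≫ whiskerRightIso σ e⟩⟩
  · -- `D` maps `eMe` onto `eMe`
    intro X hX
    obtain ⟨hlX, hrX⟩ := good_of_inHecke e π hπ₁ hπ₂ hX
    have hlZ : IsIso (lm e π (G.dinv X)) := isIso_lm_dinv G e π hπ₁ hπ₂ hrX
    obtain ⟨τ⟩ := dinv_iso_right G e π hπ₁ hπ₂ j hlX
    exact ⟨G.dinv X, ⟨G.dinv X,
      ⟨τ ≪≫ whiskerRightIso (asIso (lm e π (G.dinv X))) e⟩⟩, ⟨G.dDinv X⟩⟩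
  · -- the natural family of bijections
    have hrm : ∀ Y : M, InHecke e Y → IsIso (rm e π Y) :=
      fun Y hY => (good_of_inHecke e π hπ₁ hπ₂ hY).2
    refine ⟨fun X Y hX hY =>
      ((G.homEquiv (X ⊗ Y) e).symm.trans
        ((precompEquiv (α_ X Y e) G.K).trans
          ((G.homEquiv X (Y ⊗ e)).trans
            (postcompEquiv (dmapIso G (rm e π Y) (hrm Y hY)) X)))), ?_, ?_⟩
    · intro X X' Y hX hX' hY f h
      simp only [Equiv.trans_apply, precompEquiv, postcompEquiv, Equiv.coe_fn_mk]
      rw [homEquiv_symm_natX G e (f ▷ Y) h, ← associator_inv_naturality_left_assoc,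
        G.homEquiv_natX (Y ⊗ e) f, Category.assoc]
    · intro X Y Y' hX hY hY' q h
      simp only [Equiv.trans_apply, precompEquiv, postcompEquiv, Equiv.coe_fn_mk,
        dmapIso_hom]
      rw [homEquiv_symm_natX G e (X ◁ q) h, ← associator_inv_naturality_middle_assoc,
        G.homEquiv_natY X (q ▷ e)]
      simp only [Category.assoc, GVCat.dmap, ← Functor.map_comp, ← op_comp,
        ← rm_nat e π q]
end

section
/- Let M be an r-category with duality functor D and let ε : A ⊗ B → 1 be a morphism in M. Then (B, ε) is a right rigid dual of A if and only if: (a) the morphism B → D⁻¹A induced by ε (via the isomorphism Hom(A ⊗ B, 1) ≅ Hom(B, D⁻¹A)) is an isomorphism, and (b) the canonical morphism B ⊗ A → B ⊙ A is an isomorphism. In this case the canonical morphisms B ⊗ Y → B ⊙ Y and Y ⊗ A → Y ⊙ A are isomorphisms for all Y ∈ M. -/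
open CategoryTheory Opposite MonoidalCategory

universe v u

/-- An r-category: a monoidal category whose unit object is dualizing, together with
the duality anti-equivalence `D` and the natural family of bijections
`Hom(X ⊗ Y, 𝟙) ≃ Hom(X, D Y)`. -/
structure RCat (M : Type u) [Category.{v} M] [MonoidalCategory M] where
  D : Mᵒᵖ ≌ M
  homEquiv : ∀ X Y : M, (X ⊗ Y ⟶ 𝟙_ M) ≃ (X ⟶ D.functor.obj (op Y))
  homEquiv_natX : ∀ {X X' : M} (Y : M) (f : X' ⟶ X) (h : X ⊗ Y ⟶ 𝟙_ M),
    homEquiv X' Y (f ▷ Y ≫ h) = f ≫ homEquiv X Y h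
  homEquiv_natY : ∀ (X : M) {Y Y' : M} (g : Y' ⟶ Y) (h : X ⊗ Y ⟶ 𝟙_ M),
    homEquiv X Y' (X ◁ g ≫ h) = homEquiv X Y h ≫ D.functor.map g.op

namespace RCat

variable {M : Type u} [Category.{v} M] [MonoidalCategory M] (R : RCat M)

/-- The duality functor on objects: `D Y`. -/
abbrev d (Y : M) : M := R.D.functor.obj (op Y)

/-- The inverse duality functor on objects: `D⁻¹ X`. -/
abbrev dinv (X : M) : M := (R.D.inverse.obj X).unop

/-- The second defining natural bijection `Hom(X ⊗ Y, 𝟙) ≃ Hom(Y, D⁻¹ X)`. -/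
def homEquiv' (X Y : M) : (X ⊗ Y ⟶ 𝟙_ M) ≃ (Y ⟶ R.dinv X) :=
  (R.homEquiv X Y).trans
    ((R.D.symm.toAdjunction.homEquiv X (op Y)).symm.trans (opEquiv _ _))

/-- The evaluation morphism `D X ⊗ X ⟶ 𝟙`, corresponding to `𝟙 (D X)`. -/
def ev (X : M) : R.d X ⊗ X ⟶ 𝟙_ M := (R.homEquiv (R.d X) X).symm (𝟙 (R.d X))

/-- The second tensor product `X ⊙ Y := D⁻¹ (D Y ⊗ D X)` of an r-category. -/
abbrev odot (X Y : M) : M := R.dinv (R.d Y ⊗ R.d X)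

/-- The canonical morphism `X ⊗ Y ⟶ X ⊙ Y`, obtained from the evaluation morphisms
`D X ⊗ X ⟶ 𝟙` and `D Y ⊗ Y ⟶ 𝟙` via `D Y ⊗ D X ⊗ X ⊗ Y ⟶ 𝟙` and the isomorphism
`Hom(Z ⊗ W, 𝟙) ≅ Hom(W, D⁻¹ Z)`. -/
def canMap (X Y : M) : X ⊗ Y ⟶ R.odot X Y :=
  R.homEquiv' (R.d Y ⊗ R.d X) (X ⊗ Y)
    ((α_ (R.d Y) (R.d X) (X ⊗ Y)).hom ≫
      (R.d Y ◁ ((α_ (R.d X) X Y).inv ≫ (R.ev X ▷ Y) ≫ (λ_ Y).hom)) ≫ R.ev Y)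

end RCat

namespace RCatAux
open RCat

variable {M : Type u} [Category.{v} M] [MonoidalCategory M] (R : RCat M)

lemma homEquiv_ev (X : M) : R.homEquiv (R.d X) X (R.ev X) = 𝟙 (R.d X) :=
  (R.homEquiv _ _).apply_symm_apply _

lemma factor {X Y : M} (h : X ⊗ Y ⟶ 𝟙_ M) :
    (R.homEquiv X Y h ▷ Y) ≫ R.ev Y = h := by
  apply (R.homEquiv X Y).injective
  rw [R.homEquiv_natX, homEquiv_ev, Category.comp_id]

lemma homEquiv'_natY (X : M) {Y Y' : M} (g : Y' ⟶ Y) (h : X ⊗ Y ⟶ 𝟙_ M) :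
    R.homEquiv' X Y' (X ◁ g ≫ h) = g ≫ R.homEquiv' X Y h := by
  simp only [homEquiv', Equiv.trans_apply, R.homEquiv_natY, opEquiv, Equiv.coe_fn_mk]
  rw [show R.D.functor.map g.op = R.D.symm.inverse.map g.op from rfl]
  erw [Adjunction.homEquiv_counit, Adjunction.homEquiv_counit]
  simp only [Equivalence.toAdjunction_counit, Functor.map_comp, Category.assoc]
  rw [← Functor.comp_map, (R.D.symm.counit).naturality g.op]
  simp

/-- the "evaluation" on the other side -/
def ev' (X : M) : X ⊗ R.dinv X ⟶ 𝟙_ M := (R.homEquiv' X (R.dinv X)).symm (𝟙 _)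

lemma homEquiv'_ev' (X : M) : R.homEquiv' X (R.dinv X) (ev' R X) = 𝟙 (R.dinv X) :=
  (R.homEquiv' _ _).apply_symm_apply _

lemma factor' {X Y : M} (h : X ⊗ Y ⟶ 𝟙_ M) :
    (X ◁ R.homEquiv' X Y h) ≫ ev' R X = h := by
  apply (R.homEquiv' X Y).injective
  rw [homEquiv'_natY, homEquiv'_ev', Category.comp_id]

section Yon
variable {C : Type*} [Category C]

lemma isIso_of_postcomp_bijective {P Q : C} {g : P ⟶ Q}
    (H : ∀ T : C, Function.Bijective fun u : T ⟶ P => u ≫ g) : IsIso g := by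
  obtain ⟨h, hh⟩ := (H Q).2 (𝟙 Q)
  refine ⟨h, ?_, hh⟩
  apply (H P).1
  simp only [Category.assoc, hh, Category.comp_id, Category.id_comp]

lemma postcomp_bijective_of_isIso {P Q : C} (g : P ⟶ Q) [IsIso g] (T : C) :
    Function.Bijective fun u : T ⟶ P => u ≫ g := by
  refine ⟨fun a b hab => by simpa using hab =≫ inv g, fun v => ⟨v ≫ inv g, by simp⟩⟩

end Yon

variable {M : Type u} [Category.{v} M] [MonoidalCategory M] (R : RCat M)

lemma precomp_bijective_of_isIso {C : Type*} [Category C] {P Q : C} (g : Q ⟶ P) [IsIso g]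
    (T : C) : Function.Bijective fun u : P ⟶ T => g ≫ u := by
  refine ⟨fun a b hab => by simpa using inv g ≫= hab, fun v => ⟨inv g ≫ v, by simp⟩⟩

lemma isIso_homEquiv'_iff {Z W : M} (p : Z ⊗ W ⟶ 𝟙_ M) :
    IsIso (R.homEquiv' Z W p) ↔
      ∀ W' : M, Function.Bijective fun u : W' ⟶ W => (Z ◁ u) ≫ p := by
  have key : ∀ (W' : M) (u : W' ⟶ W),
      R.homEquiv' Z W' ((Z ◁ u) ≫ p) = u ≫ R.homEquiv' Z W p :=
    fun W' u => homEquiv'_natY R Z u p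
  constructor
  · intro hiso W'
    have : (fun u : W' ⟶ W => (Z ◁ u) ≫ p)
        = (R.homEquiv' Z W').symm ∘ fun u : W' ⟶ W => u ≫ R.homEquiv' Z W p := by
      funext u
      rw [Function.comp_apply, ← key, Equiv.symm_apply_apply]
    rw [this]
    exact (Equiv.bijective _).comp (postcomp_bijective_of_isIso _ _)
  · intro H
    apply isIso_of_postcomp_bijective
    intro T
    have : (fun u : T ⟶ W => u ≫ R.homEquiv' Z W p)
        = (R.homEquiv' Z T) ∘ fun u : T ⟶ W => (Z ◁ u) ≫ p := by
      funext u; rw [Function.comp_apply, key]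
    rw [this]
    exact (Equiv.bijective _).comp (H T)

lemma isIso_homEquiv_iff {X Y : M} (h : X ⊗ Y ⟶ 𝟙_ M) :
    IsIso (R.homEquiv X Y h) ↔
      ∀ X' : M, Function.Bijective fun u : X' ⟶ X => (u ▷ Y) ≫ h := by
  have key : ∀ (X' : M) (u : X' ⟶ X),
      R.homEquiv X' Y ((u ▷ Y) ≫ h) = u ≫ R.homEquiv X Y h :=
    fun X' u => R.homEquiv_natX Y u h
  constructor
  · intro hiso X'
    have : (fun u : X' ⟶ X => (u ▷ Y) ≫ h)
        = (R.homEquiv X' Y).symm ∘ fun u : X' ⟶ X => u ≫ R.homEquiv X Y h := by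
      funext u
      rw [Function.comp_apply, ← key, Equiv.symm_apply_apply]
    rw [this]
    exact (Equiv.bijective _).comp (postcomp_bijective_of_isIso _ _)
  · intro H
    apply isIso_of_postcomp_bijective
    intro T
    have : (fun u : T ⟶ X => u ≫ R.homEquiv X Y h)
        = (R.homEquiv T Y) ∘ fun u => (u ▷ Y) ≫ h := by
      funext u; rw [Function.comp_apply, key]
    rw [this]
    exact (Equiv.bijective _).comp (H T)



lemma homEquiv'_ev (Y : M) :
    R.homEquiv' (R.d Y) Y (R.ev Y) = (R.D.unitInv.app (op Y)).unop := by
  simp only [homEquiv', Equiv.trans_apply, homEquiv_ev]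
  erw [Adjunction.homEquiv_counit]
  rw [R.D.symm.functor.map_id]
  show (𝟙 _ ≫ R.D.symm.counit.app (op Y)).unop = _
  rw [Category.id_comp]
  rfl

instance isIso_homEquiv'_ev (Y : M) : IsIso (R.homEquiv' (R.d Y) Y (R.ev Y)) := by
  rw [homEquiv'_ev]; infer_instance

lemma homEquiv_ev' (X : M) :
    R.homEquiv X (R.dinv X) (ev' R X) = R.D.counitInv.app X := by
  simp only [ev', homEquiv', Equiv.symm_trans_apply, Equiv.apply_symm_apply]
  erw [Adjunction.homEquiv_unit]
  show R.D.symm.unit.app X ≫ R.D.symm.inverse.map ((𝟙 (R.dinv X)).op) = _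
  rw [show R.D.symm.inverse.map (𝟙 (R.dinv X)).op = 𝟙 _ by rw [op_id]; exact R.D.symm.inverse.map_id _]
  exact (Category.comp_id _).trans rfl

instance isIso_homEquiv_ev' (X : M) : IsIso (R.homEquiv X (R.dinv X) (ev' R X)) := by
  rw [homEquiv_ev']; infer_instance

lemma homEquiv_eq_comp {A B : M} (ε : A ⊗ B ⟶ 𝟙_ M) :
    R.homEquiv A B ε =
      R.homEquiv A (R.dinv A) (ev' R A) ≫ R.D.functor.map (R.homEquiv' A B ε).op := by
  conv_lhs => rw [← factor' R ε]
  rw [R.homEquiv_natY]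

lemma pairing_d_bijective (Y S : M) :
    Function.Bijective fun w : S ⟶ Y => (R.d Y ◁ w) ≫ R.ev Y := by
  have e1 : (fun w : S ⟶ Y => (R.d Y ◁ w) ≫ R.ev Y)
      = (R.homEquiv' (R.d Y) S).symm ∘
          fun w : S ⟶ Y => w ≫ R.homEquiv' (R.d Y) Y (R.ev Y) := by
    funext w; rw [Function.comp_apply, ← homEquiv'_natY, Equiv.symm_apply_apply]
  rw [e1]
  exact (Equiv.bijective _).comp (postcomp_bijective_of_isIso _ _)

/-- middle pairing `D X ⊗ (X ⊗ Y) ⟶ Y` -/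
def mid (X Y : M) : R.d X ⊗ (X ⊗ Y) ⟶ Y :=
  (α_ (R.d X) X Y).inv ≫ (R.ev X ▷ Y) ≫ (λ_ Y).hom

lemma canMap_eq (X Y : M) :
    R.canMap X Y = R.homEquiv' (R.d Y ⊗ R.d X) (X ⊗ Y)
      ((α_ (R.d Y) (R.d X) (X ⊗ Y)).hom ≫ (R.d Y ◁ mid R X Y) ≫ R.ev Y) := rfl

lemma key_factor {X Y W' : M} (u : W' ⟶ X ⊗ Y) :
    ((R.d Y ⊗ R.d X) ◁ u) ≫ ((α_ (R.d Y) (R.d X) (X ⊗ Y)).hom ≫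
        (R.d Y ◁ mid R X Y) ≫ R.ev Y)
      = (α_ (R.d Y) (R.d X) W').hom ≫
          (R.d Y ◁ ((R.d X ◁ u) ≫ mid R X Y)) ≫ R.ev Y := by
  simp

lemma isIso_canMap_iff (X Y : M) :
    IsIso (R.canMap X Y) ↔ ∀ W' : M,
      Function.Bijective fun u : W' ⟶ X ⊗ Y => (R.d X ◁ u) ≫ mid R X Y := by
  rw [canMap_eq, isIso_homEquiv'_iff]
  apply forall_congr'
  intro W'
  have e1 : (fun u : W' ⟶ X ⊗ Y => ((R.d Y ⊗ R.d X) ◁ u) ≫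
        ((α_ (R.d Y) (R.d X) (X ⊗ Y)).hom ≫ (R.d Y ◁ mid R X Y) ≫ R.ev Y))
      = (fun w : R.d Y ⊗ (R.d X ⊗ W') ⟶ 𝟙_ M => (α_ (R.d Y) (R.d X) W').hom ≫ w) ∘
        (fun v : R.d X ⊗ W' ⟶ Y => (R.d Y ◁ v) ≫ R.ev Y) ∘
        (fun u : W' ⟶ X ⊗ Y => (R.d X ◁ u) ≫ mid R X Y) := by
    funext u
    exact key_factor R u
  rw [e1, Function.Bijective.of_comp_iff' (precomp_bijective_of_isIso _ _),
    Function.Bijective.of_comp_iff' (pairing_d_bijective R Y _)]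

section PartI

lemma bijective_leftPair {A B : M} [ExactPairing B A] (W' : M) :
    Function.Bijective fun u : W' ⟶ B => (A ◁ u) ≫ ε_ B A := by
  have e : (fun u : W' ⟶ B => (A ◁ u) ≫ ε_ B A)
      = (tensorLeftHomEquiv W' B A (𝟙_ M)).symm ∘ fun u : W' ⟶ B => u ≫ (ρ_ B).inv := by
    funext u
    simp only [tensorLeftHomEquiv, Equiv.coe_fn_symm_mk, Function.comp_apply]
    monoidal
  rw [e]
  exact (Equiv.bijective _).comp (postcomp_bijective_of_isIso _ _)

lemma partI_f_isIso {A B : M} [ExactPairing B A] : IsIso (R.homEquiv' A B (ε_ B A)) := by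
  rw [isIso_homEquiv'_iff]
  exact fun W' => bijective_leftPair W'

lemma partI_g_isIso {A B : M} [ExactPairing B A] : IsIso (R.homEquiv A B (ε_ B A)) := by
  rw [homEquiv_eq_comp]
  have := partI_f_isIso (R := R) (A := A) (B := B)
  infer_instance

lemma partI_canMap_BY {A B : M} [ExactPairing B A] (Y : M) : IsIso (R.canMap B Y) := by
  rw [isIso_canMap_iff]
  intro W'
  set g := R.homEquiv A B (ε_ B A) with hgdef
  have hgi : IsIso g := partI_g_isIso R
  have hg : (g ▷ B) ≫ R.ev B = ε_ B A := factor R _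
  haveI : IsIso (g ▷ W') := (whiskerRightIso (asIso g) W').isIso_hom
  have e : (fun v : R.d B ⊗ W' ⟶ Y => (g ▷ W') ≫ v) ∘
      (fun u : W' ⟶ B ⊗ Y => (R.d B ◁ u) ≫ mid R B Y)
      = (tensorLeftHomEquiv W' B A Y).symm := by
    funext u
    show (g ▷ W') ≫ (R.d B ◁ u) ≫ mid R B Y = _
    rw [← whisker_exchange_assoc]
    simp only [mid, tensorLeftHomEquiv, Equiv.coe_fn_symm_mk]
    rw [← hg]
    simp
  have hb : Function.Bijective ((fun v : R.d B ⊗ W' ⟶ Y => (g ▷ W') ≫ v) ∘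
      (fun u : W' ⟶ B ⊗ Y => (R.d B ◁ u) ≫ mid R B Y)) := by
    rw [e]; exact Equiv.bijective _
  exact (Function.Bijective.of_comp_iff' (precomp_bijective_of_isIso _ _) _).mp hb

lemma partI_canMap_YA {A B : M} [ExactPairing B A] (Y : M) : IsIso (R.canMap Y A) := by
  rw [isIso_canMap_iff]
  intro W'
  have hgB := (isIso_homEquiv_iff R (ε_ B A)).mp (partI_g_isIso R)
  have e : ((fun v : R.d Y ⊗ W' ⟶ A => (v ▷ B) ≫ ε_ B A) ∘
      fun u : W' ⟶ Y ⊗ A => (R.d Y ◁ u) ≫ mid R Y A)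
      = (fun w : R.d Y ⊗ (W' ⊗ B) ⟶ 𝟙_ M => (α_ (R.d Y) W' B).hom ≫ w) ∘
        (fun v : W' ⊗ B ⟶ Y => (R.d Y ◁ v) ≫ R.ev Y) ∘
        (tensorRightHomEquiv W' B A Y).symm := by
    funext u
    show (((R.d Y ◁ u) ≫ mid R Y A) ▷ B) ≫ ε_ B A
        = (α_ (R.d Y) W' B).hom ≫
            (R.d Y ◁ ((u ▷ B) ≫ (α_ Y A B).hom ≫ (Y ◁ ε_ B A) ≫ (ρ_ Y).hom)) ≫ R.ev Y
    simp only [mid]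
    calc (((R.d Y ◁ u) ≫ (α_ (R.d Y) Y A).inv ≫ (R.ev Y ▷ A) ≫ (λ_ A).hom) ▷ B) ≫ ε_ B A
        = 𝟙 _ ⊗≫ ((R.d Y ◁ u) ▷ B) ⊗≫
            (R.ev Y ▷ (A ⊗ B) ≫ 𝟙_ M ◁ ε_ B A) ⊗≫ 𝟙 _ := by
          monoidal
      _ = 𝟙 _ ⊗≫ ((R.d Y ◁ u) ▷ B) ⊗≫
            ((R.d Y ⊗ Y) ◁ ε_ B A ≫ R.ev Y ▷ 𝟙_ M) ⊗≫ 𝟙 _ := by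
          rw [whisker_exchange]
      _ = (α_ (R.d Y) W' B).hom ≫
            (R.d Y ◁ ((u ▷ B) ≫ (α_ Y A B).hom ≫ (Y ◁ ε_ B A) ≫ (ρ_ Y).hom)) ≫ R.ev Y := by
          monoidal
  have hb : Function.Bijective ((fun v : R.d Y ⊗ W' ⟶ A => (v ▷ B) ≫ ε_ B A) ∘
      fun u : W' ⟶ Y ⊗ A => (R.d Y ◁ u) ≫ mid R Y A) := by
    rw [e]
    exact ((precomp_bijective_of_isIso _ _).comp (pairing_d_bijective R Y _)).comp
      (Equiv.bijective _)
  exact (Function.Bijective.of_comp_iff' (hgB _) _).mp hb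

end PartI

section PartII

lemma partII {A B : M} (ε : A ⊗ B ⟶ 𝟙_ M)
    (hf : IsIso (R.homEquiv' A B ε)) (hcan : IsIso (R.canMap B A)) :
    IsRightRigidDual A B ε := by
  haveI := hf
  have hg : IsIso (R.homEquiv A B ε) := by rw [homEquiv_eq_comp]; infer_instance
  haveI := hg
  set g := R.homEquiv A B ε with hgdef
  have hgB : (g ▷ B) ≫ R.ev B = ε := factor R ε
  obtain ⟨c, hc⟩ := ((isIso_canMap_iff R B A).mp hcan (𝟙_ M)).2 ((ρ_ (R.d B)).hom ≫ inv g)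
  have aux : (g ▷ (B ⊗ A)) ≫ (α_ (R.d B) B A).inv ≫ (R.ev B ▷ A) ≫ (λ_ A).hom
      = (α_ A B A).inv ≫ (ε ▷ A) ≫ (λ_ A).hom := by
    rw [← hgB]
    simp
  have h2 := (g ▷ (𝟙_ M)) ≫= hc
  rw [← whisker_exchange_assoc] at h2
  simp only [mid] at h2
  rw [aux] at h2
  -- h2 : A ◁ c ≫ (α_ A B A).inv ≫ ε ▷ A ≫ (λ_ A).hom = g ▷ 𝟙 ≫ (ρ_ (R.d B)).hom ≫ inv g
  have t1' : (A ◁ c) ≫ (α_ A B A).inv ≫ (ε ▷ A) ≫ (λ_ A).hom = (ρ_ A).hom := by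
    rw [h2]
    simp
  have t1 : (ρ_ A).inv ≫ (A ◁ c) ≫ (α_ A B A).inv ≫ (ε ▷ A) ≫ (λ_ A).hom = 𝟙 A := by
    rw [t1']; simp
  refine ⟨c, t1, ?_⟩
  have hfB := (isIso_homEquiv'_iff R ε).mp hf B
  apply hfB.1
  show (A ◁ ((λ_ B).inv ≫ (c ▷ B) ≫ (α_ B A B).hom ≫ (B ◁ ε) ≫ (ρ_ B).hom)) ≫ ε
      = (A ◁ 𝟙 B) ≫ ε
  calc (A ◁ ((λ_ B).inv ≫ (c ▷ B) ≫ (α_ B A B).hom ≫ (B ◁ ε) ≫ (ρ_ B).hom)) ≫ ε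
      = 𝟙 _ ⊗≫ (A ◁ (c ▷ B)) ⊗≫ ((A ⊗ B) ◁ ε ≫ ε ▷ 𝟙_ M) ⊗≫ 𝟙 _ := by
        monoidal
    _ = 𝟙 _ ⊗≫ (A ◁ (c ▷ B)) ⊗≫ (ε ▷ (A ⊗ B) ≫ 𝟙_ M ◁ ε) ⊗≫ 𝟙 _ := by
        rw [whisker_exchange]
    _ = (((ρ_ A).inv ≫ (A ◁ c) ≫ (α_ A B A).inv ≫ (ε ▷ A) ≫ (λ_ A).hom) ▷ B) ≫ ε := by
        monoidal
    _ = (𝟙 A ▷ B) ≫ ε := by rw [t1]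
    _ = (A ◁ 𝟙 B) ≫ ε := by simp

end PartII

end RCatAux

open RCatAux in
/-- Let `M` be an r-category and `ε : A ⊗ B ⟶ 𝟙`. Then `(B, ε)` is a right
rigid dual of `A` iff (a) the morphism `B ⟶ D⁻¹ A` induced by `ε` is an isomorphism, and
(b) the canonical morphism `B ⊗ A ⟶ B ⊙ A` is an isomorphism. In this case the canonical
morphisms `B ⊗ Y ⟶ B ⊙ Y` and `Y ⊗ A ⟶ Y ⊙ A` are isomorphisms for all `Y`. -/
theorem stmt4 {M : Type u} [Category.{v} M] [MonoidalCategory M] (R : RCat M)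
    (A B : M) (ε : A ⊗ B ⟶ 𝟙_ M) :
    (IsRightRigidDual A B ε ↔
      (IsIso (R.homEquiv' A B ε) ∧ IsIso (R.canMap B A)))
    ∧ (IsRightRigidDual A B ε →
        ∀ Y : M, IsIso (R.canMap B Y) ∧ IsIso (R.canMap Y A)) := by
  have mk : IsRightRigidDual A B ε → ∃ _ : ExactPairing B A, ExactPairing.evaluation B A = ε := by
    rintro ⟨c, t1, t2⟩
    have h1 : A ◁ c ≫ (α_ A B A).inv ≫ ε ▷ A = (ρ_ A).hom ≫ (λ_ A).inv := by
      rw [← cancel_epi (ρ_ A).inv, ← cancel_mono (λ_ A).hom]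
      simpa using t1
    have h2 : c ▷ B ≫ (α_ B A B).hom ≫ B ◁ ε = (λ_ B).hom ≫ (ρ_ B).inv := by
      rw [← cancel_epi (λ_ B).inv, ← cancel_mono (ρ_ B).hom]
      simpa using t2
    exact ⟨⟨c, ε, h1, h2⟩, rfl⟩
  constructor
  · constructor
    · intro h
      obtain ⟨inst, hε⟩ := mk h
      subst hε
      exact ⟨partI_f_isIso R, partI_canMap_BY (A := A) R A⟩
    · rintro ⟨hf, hcan⟩
      exact partII R ε hf hcan
  · intro h Y
    obtain ⟨inst, hε⟩ := mk h
    subst hε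
    exact ⟨partI_canMap_BY (A := A) R Y, partI_canMap_YA (B := B) R Y⟩
end

section
/- An object X of an r-category M is rigid if and only if the canonical morphisms X ⊗ DX → X ⊙ DX and D⁻¹X ⊗ X → D⁻¹X ⊙ X are isomorphisms. In this case the left rigid dual of X equals DX, the right rigid dual equals D⁻¹X, and the canonical morphisms X ⊗ Y → X ⊙ Y and Y ⊗ X → Y ⊙ X are isomorphisms for all Y ∈ M. -/
open CategoryTheory Opposite MonoidalCategory

universe v u

/-! ### Auxiliary development -/

namespace Stmt5Aux

open RCat

variable {M : Type u} [Category.{v} M] [MonoidalCategory M]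

section General

variable {A A' B B' C V W : M}

/-- A morphism is an isomorphism if postcomposition with it is bijective on all hom sets. -/
lemma isIso_of_postcomp_bij {A B : M} (φ : A ⟶ B)
    (h : ∀ V : M, Function.Bijective (fun t : V ⟶ A => t ≫ φ)) : IsIso φ := by
  obtain ⟨ψ, hψ⟩ := (h B).2 (𝟙 B)
  refine ⟨ψ, ?_, hψ⟩
  apply (h A).1
  simp only [Category.assoc, hψ]
  simp

/-- Conjugating a one-sided triangle identity in the first slot of the pairing. -/
lemma conj1 (ε : A ⊗ B ⟶ 𝟙_ M) (ε' : A' ⊗ B ⟶ 𝟙_ M) (φ : A' ⟶ A)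
    (hε : ε' = (φ ▷ B) ≫ ε) (c : 𝟙_ M ⟶ B ⊗ C) (r : A ⟶ C)
    (h : (A ◁ c) ≫ (α_ A B C).inv ≫ (ε ▷ C) ≫ (λ_ C).hom = (ρ_ A).hom ≫ r) :
    (A' ◁ c) ≫ (α_ A' B C).inv ≫ (ε' ▷ C) ≫ (λ_ C).hom = (ρ_ A').hom ≫ φ ≫ r := by
  subst hε
  calc (A' ◁ c) ≫ (α_ A' B C).inv ≫ ((φ ▷ B) ≫ ε) ▷ C ≫ (λ_ C).hom
      = (A' ◁ c ≫ φ ▷ (B ⊗ C)) ≫ (α_ A B C).inv ≫ (ε ▷ C) ≫ (λ_ C).hom := by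
        simp only [comp_whiskerRight, Category.assoc, associator_inv_naturality_left_assoc]
    _ = (φ ▷ 𝟙_ M) ≫ (A ◁ c) ≫ (α_ A B C).inv ≫ (ε ▷ C) ≫ (λ_ C).hom := by
        rw [Category.assoc, whisker_exchange_assoc]
    _ = (φ ▷ 𝟙_ M) ≫ (ρ_ A).hom ≫ r := by rw [h]
    _ = (ρ_ A').hom ≫ φ ≫ r := by simp

/-- Changing the output (third) strand of a one-sided triangle identity. -/
lemma conj2 {C' : M} (ε : A ⊗ B ⟶ 𝟙_ M) (c : 𝟙_ M ⟶ B ⊗ C) (ψ : C ⟶ C') (r : A ⟶ C)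
    (h : (A ◁ c) ≫ (α_ A B C).inv ≫ (ε ▷ C) ≫ (λ_ C).hom = (ρ_ A).hom ≫ r) :
    (A ◁ (c ≫ (B ◁ ψ))) ≫ (α_ A B C').inv ≫ (ε ▷ C') ≫ (λ_ C').hom
      = (ρ_ A).hom ≫ r ≫ ψ := by
  calc (A ◁ (c ≫ (B ◁ ψ))) ≫ (α_ A B C').inv ≫ (ε ▷ C') ≫ (λ_ C').hom
      = (A ◁ c) ≫ (α_ A B C).inv ≫ ((A ⊗ B) ◁ ψ) ≫ (ε ▷ C') ≫ (λ_ C').hom := by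
        simp only [MonoidalCategory.whiskerLeft_comp, Category.assoc,
          associator_inv_naturality_right_assoc]
    _ = (A ◁ c) ≫ (α_ A B C).inv ≫ (ε ▷ C) ≫ (𝟙_ M ◁ ψ) ≫ (λ_ C').hom := by
        rw [whisker_exchange_assoc]
    _ = ((A ◁ c) ≫ (α_ A B C).inv ≫ (ε ▷ C) ≫ (λ_ C).hom) ≫ ψ := by
        simp
    _ = (ρ_ A).hom ≫ r ≫ ψ := by rw [h]; simp

/-- Changing the middle (second) strand of a one-sided triangle identity. -/
lemma conj3 (ε : A ⊗ B ⟶ 𝟙_ M) (ε' : A ⊗ B' ⟶ 𝟙_ M) (φ : B ⟶ B')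
    (hε : ε = (A ◁ φ) ≫ ε') (c : 𝟙_ M ⟶ B ⊗ C) (r : A ⟶ C)
    (h : (A ◁ c) ≫ (α_ A B C).inv ≫ (ε ▷ C) ≫ (λ_ C).hom = (ρ_ A).hom ≫ r) :
    (A ◁ (c ≫ (φ ▷ C))) ≫ (α_ A B' C).inv ≫ (ε' ▷ C) ≫ (λ_ C).hom
      = (ρ_ A).hom ≫ r := by
  subst hε
  calc (A ◁ (c ≫ (φ ▷ C))) ≫ (α_ A B' C).inv ≫ (ε' ▷ C) ≫ (λ_ C).hom
      = (A ◁ c) ≫ (α_ A B C).inv ≫ ((A ◁ φ) ▷ C) ≫ (ε' ▷ C) ≫ (λ_ C).hom := by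
        simp only [MonoidalCategory.whiskerLeft_comp, Category.assoc,
          associator_inv_naturality_middle_assoc]
    _ = (A ◁ c) ≫ (α_ A B C).inv ≫ (((A ◁ φ) ≫ ε') ▷ C) ≫ (λ_ C).hom := by
        simp [comp_whiskerRight]
    _ = (ρ_ A).hom ≫ r := h

/-- From a one-sided triangle identity together with injectivity of pairing against `ε`,
deduce the full rigid-duality statement. -/
lemma isRightRigidDual_of (A B : M) (ε : A ⊗ B ⟶ 𝟙_ M) (c : 𝟙_ M ⟶ B ⊗ A)
    (h1 : (A ◁ c) ≫ (α_ A B A).inv ≫ (ε ▷ A) ≫ (λ_ A).hom = (ρ_ A).hom)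
    (h2 : Function.Injective (fun t : B ⟶ B => (A ◁ t) ≫ ε)) :
    IsRightRigidDual A B ε := by
  refine ⟨c, by rw [h1]; simp, ?_⟩
  apply h2
  show (A ◁ ((λ_ B).inv ≫ (c ▷ B) ≫ (α_ B A B).hom ≫ (B ◁ ε) ≫ (ρ_ B).hom)) ≫ ε
      = (A ◁ 𝟙 B) ≫ ε
  calc (A ◁ ((λ_ B).inv ≫ (c ▷ B) ≫ (α_ B A B).hom ≫ (B ◁ ε) ≫ (ρ_ B).hom)) ≫ ε
      = 𝟙 _ ⊗≫ (A ◁ c) ▷ B ⊗≫ ((A ⊗ B) ◁ ε ≫ ε ▷ 𝟙_ M) ⊗≫ 𝟙 _ := by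
        monoidal
    _ = 𝟙 _ ⊗≫ (A ◁ c) ▷ B ⊗≫ (ε ▷ (A ⊗ B) ≫ 𝟙_ M ◁ ε) ⊗≫ 𝟙 _ := by
        rw [whisker_exchange]
    _ = 𝟙 _ ⊗≫ ((A ◁ c) ≫ (α_ A B A).inv ≫ (ε ▷ A) ≫ (λ_ A).hom) ▷ B ⊗≫ ε := by
        monoidal
    _ = 𝟙 _ ⊗≫ (ρ_ A).hom ▷ B ⊗≫ ε := by rw [h1]
    _ = (A ◁ 𝟙 B) ≫ ε := by monoidal

end General

section Infra

variable (R : RCat M)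

lemma homEquiv_ev (X : M) : R.homEquiv (R.d X) X (R.ev X) = 𝟙 (R.d X) := by
  simp [RCat.ev]

/-- The second canonical evaluation `X ⊗ D⁻¹X ⟶ 𝟙`. -/
noncomputable def ev' (X : M) : X ⊗ R.dinv X ⟶ 𝟙_ M :=
  (R.homEquiv' X (R.dinv X)).symm (𝟙 (R.dinv X))

lemma homEquiv'_ev' (X : M) : R.homEquiv' X (R.dinv X) (ev' R X) = 𝟙 (R.dinv X) := by
  simp [ev']

lemma homEquiv'_natY (X : M) {Y Y' : M} (g : Y' ⟶ Y) (h : X ⊗ Y ⟶ 𝟙_ M) :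
    R.homEquiv' X Y' (X ◁ g ≫ h) = g ≫ R.homEquiv' X Y h := by
  simp only [RCat.homEquiv', Equiv.trans_apply, R.homEquiv_natY X g h]
  rw [show R.D.functor.map g.op = R.D.symm.inverse.map g.op from rfl]
  have hnat := Adjunction.homEquiv_naturality_right_symm
    (adj := R.D.symm.toAdjunction) ((R.homEquiv X Y) h) g.op
  erw [hnat]
  simp [opEquiv]

/-- The canonical morphism `Y ⟶ D⁻¹ (D Y)`, an isomorphism. -/
noncomputable def uIso (Y : M) : Y ⟶ R.dinv (R.d Y) := R.homEquiv' (R.d Y) Y (R.ev Y)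

lemma uIso_eq (Y : M) : uIso R Y = (R.D.unitIso.inv.app (op Y)).unop := by
  simp [uIso, RCat.homEquiv', RCat.ev, Adjunction.homEquiv_counit, opEquiv]

instance (Y : M) : IsIso (uIso R Y) := by rw [uIso_eq]; infer_instance

/-- The canonical morphism `X ⟶ D (D⁻¹ X)`, an isomorphism. -/
noncomputable def vIso (X : M) : X ⟶ R.d (R.dinv X) := R.homEquiv X (R.dinv X) (ev' R X)

lemma vIso_eq (X : M) : vIso R X = R.D.counitIso.inv.app X := by
  simp [vIso, ev', RCat.homEquiv', Adjunction.homEquiv_unit, opEquiv]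

instance (X : M) : IsIso (vIso R X) := by rw [vIso_eq]; infer_instance

lemma ev'_eq (X : M) : ev' R X = (vIso R X ▷ R.dinv X) ≫ R.ev (R.dinv X) := by
  apply (R.homEquiv X (R.dinv X)).injective
  rw [R.homEquiv_natX, homEquiv_ev]
  simp [vIso]

lemma pairL_classify (Y V : M) (g : V ⟶ Y) :
    R.homEquiv' (R.d Y) V ((R.d Y ◁ g) ≫ R.ev Y) = g ≫ uIso R Y :=
  homEquiv'_natY R (R.d Y) g (R.ev Y)

/-- Pairing with the canonical evaluation is a bijection. -/
noncomputable def pairLEquiv (Y V : M) : (V ⟶ Y) ≃ (R.d Y ⊗ V ⟶ 𝟙_ M) where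
  toFun g := (R.d Y ◁ g) ≫ R.ev Y
  invFun p := R.homEquiv' (R.d Y) V p ≫ inv (uIso R Y)
  left_inv g := by dsimp only; rw [pairL_classify]; simp
  right_inv p := by
    dsimp only
    apply (R.homEquiv' (R.d Y) V).injective
    rw [pairL_classify]
    simp

/-- The fundamental comparison map classifying `f ≫ canMap`. -/
noncomputable def Tmap (A B W : M) (f : W ⟶ A ⊗ B) : R.d A ⊗ W ⟶ B :=
  (R.d A ◁ f) ≫ (α_ (R.d A) A B).inv ≫ (R.ev A ▷ B) ≫ (λ_ B).hom

lemma comp_canMap (A B W : M) (f : W ⟶ A ⊗ B) :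
    f ≫ R.canMap A B
      = R.homEquiv' (R.d B ⊗ R.d A) W
          ((α_ (R.d B) (R.d A) W).hom ≫ (R.d B ◁ Tmap R A B W f) ≫ R.ev B) := by
  rw [RCat.canMap, ← homEquiv'_natY]
  congr 1
  simp only [Tmap]
  monoidal

noncomputable def alphaEquiv (P Q S Z : M) : (P ⊗ (Q ⊗ S) ⟶ Z) ≃ ((P ⊗ Q) ⊗ S ⟶ Z) where
  toFun p := (α_ P Q S).hom ≫ p
  invFun q := (α_ P Q S).inv ≫ q
  left_inv p := by simp
  right_inv q := by simp

noncomputable def Echain (A B W : M) : (R.d A ⊗ W ⟶ B) ≃ (W ⟶ R.odot A B) :=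
  ((pairLEquiv R B (R.d A ⊗ W)).trans (alphaEquiv _ _ _ _)).trans
    (R.homEquiv' (R.d B ⊗ R.d A) W)

lemma comp_canMap' (A B W : M) (f : W ⟶ A ⊗ B) :
    f ≫ R.canMap A B = Echain R A B W (Tmap R A B W f) :=
  comp_canMap ..

lemma isIso_canMap_iff (A B : M) :
    IsIso (R.canMap A B) ↔ ∀ W : M, Function.Bijective (Tmap R A B W) := by
  constructor
  · intro hiso W
    have hΨ : Function.Bijective (fun f : W ⟶ A ⊗ B => f ≫ R.canMap A B) := by
      constructor
      · intro a b hab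
        simpa using congrArg (fun t => t ≫ inv (R.canMap A B)) hab
      · intro g
        exact ⟨g ≫ inv (R.canMap A B), by simp⟩
    have heq : Tmap R A B W
        = (Echain R A B W).symm ∘ (fun f : W ⟶ A ⊗ B => f ≫ R.canMap A B) := by
      funext f
      simp [comp_canMap' R A B W f]
    rw [heq]
    exact ((Echain R A B W).symm.bijective).comp hΨ
  · intro h
    have hΨ : ∀ W : M, Function.Bijective (fun f : W ⟶ A ⊗ B => f ≫ R.canMap A B) := by
      intro W
      have heq : (fun f : W ⟶ A ⊗ B => f ≫ R.canMap A B)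
          = (Echain R A B W) ∘ (Tmap R A B W) := by
        funext f
        exact comp_canMap' ..
      rw [heq]
      exact ((Echain R A B W).bijective).comp (h W)
    obtain ⟨g, hg⟩ := (hΨ (R.odot A B)).2 (𝟙 _)
    have hg' : g ≫ R.canMap A B = 𝟙 _ := hg
    refine ⟨⟨g, ?_, hg'⟩⟩
    apply (hΨ (A ⊗ B)).1
    show (R.canMap A B ≫ g) ≫ R.canMap A B = 𝟙 _ ≫ R.canMap A B
    rw [Category.assoc, hg']; simp

end Infra

section General2

variable {A B : M}

lemma tri1' (ε : A ⊗ B ⟶ 𝟙_ M) (c : 𝟙_ M ⟶ B ⊗ A)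
    (t : (ρ_ A).inv ≫ (A ◁ c) ≫ (α_ A B A).inv ≫ (ε ▷ A) ≫ (λ_ A).hom = 𝟙 A) :
    A ◁ c ≫ (α_ A B A).inv ≫ ε ▷ A = (ρ_ A).hom ≫ (λ_ A).inv := by
  rw [← cancel_mono (λ_ A).hom, ← cancel_epi (ρ_ A).inv]
  simpa using t

lemma tri2' (ε : A ⊗ B ⟶ 𝟙_ M) (c : 𝟙_ M ⟶ B ⊗ A)
    (t : (λ_ B).inv ≫ (c ▷ B) ≫ (α_ B A B).hom ≫ (B ◁ ε) ≫ (ρ_ B).hom = 𝟙 B) :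
    c ▷ B ≫ (α_ B A B).hom ≫ B ◁ ε = (λ_ B).hom ≫ (ρ_ B).inv := by
  rw [← cancel_mono (ρ_ B).hom, ← cancel_epi (λ_ B).inv]
  simpa using t

end General2

section Main

variable (R : RCat M)

lemma tmap_eq_tLHE (A Y W : M) [ExactPairing A (R.d A)]
    (hev : ε_ A (R.d A) = R.ev A) (f : W ⟶ A ⊗ Y) :
    Tmap R A Y W f = (tensorLeftHomEquiv W A (R.d A) Y).symm f := by
  simp [Tmap, tensorLeftHomEquiv, hev]

lemma bij_Tmap_left (A : M) (hA : IsRightRigidDual (R.d A) A (R.ev A)) :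
    ∀ Y W : M, Function.Bijective (Tmap R A Y W) := by
  obtain ⟨c, t1, t2⟩ := hA
  letI : ExactPairing A (R.d A) :=
    { coevaluation' := c
      evaluation' := R.ev A
      coevaluation_evaluation' := tri1' (R.ev A) c t1
      evaluation_coevaluation' := tri2' (R.ev A) c t2 }
  intro Y W
  have heq : Tmap R A Y W = ((tensorLeftHomEquiv W A (R.d A) Y).symm : _) := by
    funext f
    exact tmap_eq_tLHE R A Y W rfl f
  rw [heq]
  exact (tensorLeftHomEquiv W A (R.d A) Y).symm.bijective

lemma allIso1 (A : M) (hA : IsRightRigidDual (R.d A) A (R.ev A)) (Y : M) :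
    IsIso (R.canMap A Y) :=
  (isIso_canMap_iff R A Y).mpr (fun W => bij_Tmap_left R A hA Y W)

/-- Key decomposition of `Tmap Y X` when `X` has a left partner `N`. -/
lemma tmap_decomp (X N Y W : M) [ExactPairing N X] (f : W ⟶ Y ⊗ X) :
    Tmap R Y X W f
      = (tensorRightHomEquiv (R.d Y ⊗ W) N X (𝟙_ M))
          ((α_ (R.d Y) W N).hom ≫ (R.d Y ◁ ((tensorRightHomEquiv W N X Y).symm f)) ≫ R.ev Y)
        ≫ (λ_ X).hom := by
  dsimp only [tensorRightHomEquiv, Equiv.coe_fn_mk, Equiv.coe_fn_symm_mk]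
  refine Eq.symm ?_
  simp only [Category.assoc]
  calc (ρ_ (R.d Y ⊗ W)).inv ≫ (R.d Y ⊗ W) ◁ η_ N X ≫ (α_ (R.d Y ⊗ W) N X).inv ≫
        ((α_ (R.d Y) W N).hom ≫
          (R.d Y ◁ (f ▷ N ≫ (α_ Y X N).hom ≫ Y ◁ ε_ N X ≫ (ρ_ Y).hom)) ≫ R.ev Y) ▷ X ≫
        (λ_ X).hom
      = 𝟙 _ ⊗≫ R.d Y ◁ (W ◁ η_ N X ≫ f ▷ (N ⊗ X)) ⊗≫
          R.d Y ◁ (Y ◁ (ε_ N X ▷ X)) ⊗≫ R.ev Y ▷ X ⊗≫ 𝟙 _ := by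
        monoidal
    _ = 𝟙 _ ⊗≫ R.d Y ◁ (f ▷ 𝟙_ M ≫ (Y ⊗ X) ◁ η_ N X) ⊗≫
          R.d Y ◁ (Y ◁ (ε_ N X ▷ X)) ⊗≫ R.ev Y ▷ X ⊗≫ 𝟙 _ := by
        rw [whisker_exchange]
    _ = 𝟙 _ ⊗≫ R.d Y ◁ (f ▷ 𝟙_ M) ⊗≫
          R.d Y ◁ (Y ◁ (X ◁ η_ N X ≫ (α_ X N X).inv ≫ ε_ N X ▷ X)) ⊗≫
          R.ev Y ▷ X ⊗≫ 𝟙 _ := by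
        monoidal
    _ = 𝟙 _ ⊗≫ R.d Y ◁ (f ▷ 𝟙_ M) ⊗≫
          R.d Y ◁ (Y ◁ ((ρ_ X).hom ≫ (λ_ X).inv)) ⊗≫ R.ev Y ▷ X ⊗≫ 𝟙 _ := by
        rw [ExactPairing.coevaluation_evaluation]
    _ = Tmap R Y X W f := by
        simp only [Tmap]
        monoidal

/-- The chain of bijections through which `Tmap Y X` factors. -/
noncomputable def rightChain (X N Y W : M) [ExactPairing N X] :
    (W ⟶ Y ⊗ X) ≃ (R.d Y ⊗ W ⟶ X) :=
  (tensorRightHomEquiv W N X Y).symm.trans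
    ((pairLEquiv R Y (W ⊗ N)).trans
      ((alphaEquiv (R.d Y) W N (𝟙_ M)).trans
        ((tensorRightHomEquiv (R.d Y ⊗ W) N X (𝟙_ M)).trans
          ((Iso.refl (R.d Y ⊗ W)).homCongr (λ_ X)))))

lemma bij_Tmap_right (X N : M) [ExactPairing N X] (Y W : M) :
    Function.Bijective (Tmap R Y X W) := by
  have heq : Tmap R Y X W = (rightChain R X N Y W : _) := by
    funext f
    rw [tmap_decomp R X N Y W f]
    simp [rightChain, pairLEquiv, alphaEquiv, Iso.homCongr]
  rw [heq]
  exact (rightChain R X N Y W).bijective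

lemma allIso2 (X : M) (h : IsRightRigidDual X (R.dinv X) (ev' R X)) (Y : M) :
    IsIso (R.canMap Y X) := by
  obtain ⟨c, t1, t2⟩ := h
  letI : ExactPairing (R.dinv X) X :=
    { coevaluation' := c
      evaluation' := ev' R X
      coevaluation_evaluation' := tri1' (ev' R X) c t1
      evaluation_coevaluation' := tri2' (ev' R X) c t2 }
  exact (isIso_canMap_iff R Y X).mpr (fun W => bij_Tmap_right R X (R.dinv X) Y W)

lemma bwd1 (X : M) (h : IsIso (R.canMap X (R.d X))) :
    IsRightRigidDual (R.d X) X (R.ev X) := by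
  obtain ⟨c, hc⟩ := ((isIso_canMap_iff R X (R.d X)).mp h (𝟙_ M)).2 ((ρ_ (R.d X)).hom)
  refine isRightRigidDual_of (R.d X) X (R.ev X) c ?_ ?_
  · simpa only [Tmap] using hc
  · exact (pairLEquiv R X X).injective
lemma bwd2 (X : M) (h : IsIso (R.canMap (R.dinv X) X)) :
    IsRightRigidDual X (R.dinv X) (ev' R X) := by
  obtain ⟨c, hc⟩ := ((isIso_canMap_iff R (R.dinv X) X).mp h (𝟙_ M)).2
    ((ρ_ (R.d (R.dinv X))).hom ≫ inv (vIso R X))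
  have hc' : (R.d (R.dinv X) ◁ c) ≫ (α_ (R.d (R.dinv X)) (R.dinv X) X).inv ≫
      (R.ev (R.dinv X) ▷ X) ≫ (λ_ X).hom = (ρ_ (R.d (R.dinv X))).hom ≫ inv (vIso R X) := by
    simpa only [Tmap] using hc
  have h1 := conj1 (R.ev (R.dinv X)) (ev' R X) (vIso R X) (ev'_eq R X) c (inv (vIso R X)) hc'
  refine isRightRigidDual_of X (R.dinv X) (ev' R X) c (by simpa using h1) ?_
  intro a b hab
  have h2 := congrArg (R.homEquiv' X (R.dinv X)) hab
  simpa only [homEquiv'_natY, homEquiv'_ev', Category.comp_id] using h2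

lemma fwd1 (X : M) (h : ∃ (A : M) (ε : A ⊗ X ⟶ 𝟙_ M), IsRightRigidDual A X ε) :
    IsRightRigidDual (R.d X) X (R.ev X) := by
  obtain ⟨A, ε, c, t1, t2⟩ := h
  letI : ExactPairing X A :=
    { coevaluation' := c
      evaluation' := ε
      coevaluation_evaluation' := tri1' ε c t1
      evaluation_coevaluation' := tri2' ε c t2 }
  set φ : A ⟶ R.d X := R.homEquiv A X ε with hφ
  have hε : ε = (φ ▷ X) ≫ R.ev X := by
    apply (R.homEquiv A X).injective
    rw [R.homEquiv_natX, homEquiv_ev]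
    simp [hφ]
  haveI : IsIso φ := by
    apply isIso_of_postcomp_bij
    intro V
    have key : (fun t : V ⟶ A => t ≫ φ)
        = (R.homEquiv V X) ∘ (fun t : V ⟶ A => (t ▷ X) ≫ ε) := by
      funext t
      simp [hφ, R.homEquiv_natX]
    rw [key]
    refine (Equiv.bijective _).comp ?_
    have key2 : (fun t : V ⟶ A => (t ▷ X) ≫ ε)
        = (tensorRightHomEquiv V X A (𝟙_ M)).symm ∘ (fun t : V ⟶ A => t ≫ (λ_ A).inv) := by
      funext t
      dsimp [tensorRightHomEquiv]
      monoidal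
    rw [key2]
    refine (Equiv.bijective _).comp ?_
    constructor
    · intro a b hab
      simpa using congrArg (fun q => q ≫ (λ_ A).hom) hab
    · intro q
      exact ⟨q ≫ (λ_ A).hom, by simp⟩
  have hev : R.ev X = (inv φ ▷ X) ≫ ε := by
    rw [hε]
    simp [← comp_whiskerRight_assoc]
  have h0 : (A ◁ c) ≫ (α_ A X A).inv ≫ (ε ▷ A) ≫ (λ_ A).hom = (ρ_ A).hom ≫ 𝟙 A := by
    rw [← cancel_epi (ρ_ A).inv]
    simpa using t1
  have h1 := conj1 ε (R.ev X) (inv φ) hev c (𝟙 A) h0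
  have h2 := conj2 (R.ev X) c φ (inv φ ≫ 𝟙 A) h1
  refine isRightRigidDual_of (R.d X) X (R.ev X) (c ≫ (X ◁ φ)) (by simpa using h2)
    (pairLEquiv R X X).injective

lemma fwd2 (X : M) (h : ∃ (B : M) (ε : X ⊗ B ⟶ 𝟙_ M), IsRightRigidDual X B ε) :
    IsRightRigidDual X (R.dinv X) (ev' R X) := by
  obtain ⟨B, ε, c, t1, t2⟩ := h
  letI : ExactPairing B X :=
    { coevaluation' := c
      evaluation' := ε
      coevaluation_evaluation' := tri1' ε c t1
      evaluation_coevaluation' := tri2' ε c t2 }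
  set φ : B ⟶ R.dinv X := R.homEquiv' X B ε with hφ
  have hε : ε = (X ◁ φ) ≫ ev' R X := by
    apply (R.homEquiv' X B).injective
    rw [homEquiv'_natY, homEquiv'_ev']
    simp [hφ]
  haveI : IsIso φ := by
    apply isIso_of_postcomp_bij
    intro V
    have key : (fun t : V ⟶ B => t ≫ φ)
        = (R.homEquiv' X V) ∘ (fun t : V ⟶ B => (X ◁ t) ≫ ε) := by
      funext t
      simp [hφ, homEquiv'_natY]
    rw [key]
    refine (Equiv.bijective _).comp ?_
    have key2 : (fun t : V ⟶ B => (X ◁ t) ≫ ε)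
        = (tensorLeftHomEquiv V B X (𝟙_ M)).symm ∘ (fun t : V ⟶ B => t ≫ (ρ_ B).inv) := by
      funext t
      dsimp [tensorLeftHomEquiv]
      monoidal
    rw [key2]
    refine (Equiv.bijective _).comp ?_
    constructor
    · intro a b hab
      simpa using congrArg (fun q => q ≫ (ρ_ B).hom) hab
    · intro q
      exact ⟨q ≫ (ρ_ B).hom, by simp⟩
  have h0 : (X ◁ c) ≫ (α_ X B X).inv ≫ (ε ▷ X) ≫ (λ_ X).hom = (ρ_ X).hom ≫ 𝟙 X := by
    rw [← cancel_epi (ρ_ X).inv]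
    simpa using t1
  have h1 := conj3 ε (ev' R X) φ hε c (𝟙 X) h0
  refine isRightRigidDual_of X (R.dinv X) (ev' R X) (c ≫ (φ ▷ X)) (by simpa using h1) ?_
  intro a b hab
  have h2 := congrArg (R.homEquiv' X (R.dinv X)) hab
  simpa only [homEquiv'_natY, homEquiv'_ev', Category.comp_id] using h2

end Main

end Stmt5Aux

/-- An object `X` of an r-category is rigid iff the canonical morphisms
`X ⊗ D X ⟶ X ⊙ D X` and `D⁻¹ X ⊗ X ⟶ D⁻¹ X ⊙ X` are isomorphisms. In this case the left
rigid dual of `X` is `D X`, the right one is `D⁻¹ X` (with the canonical evaluations), and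
the canonical morphisms `X ⊗ Y ⟶ X ⊙ Y` and `Y ⊗ X ⟶ Y ⊙ X` are isomorphisms for all `Y`. -/
theorem stmt5 {M : Type u} [Category.{v} M] [MonoidalCategory M] (R : RCat M) (X : M) :
    (((∃ (A : M) (ε : A ⊗ X ⟶ 𝟙_ M), IsRightRigidDual A X ε)
        ∧ (∃ (B : M) (ε : X ⊗ B ⟶ 𝟙_ M), IsRightRigidDual X B ε)) ↔
      (IsIso (R.canMap X (R.d X)) ∧ IsIso (R.canMap (R.dinv X) X)))
    ∧ (((∃ (A : M) (ε : A ⊗ X ⟶ 𝟙_ M), IsRightRigidDual A X ε)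
        ∧ (∃ (B : M) (ε : X ⊗ B ⟶ 𝟙_ M), IsRightRigidDual X B ε)) →
        IsRightRigidDual (R.d X) X (R.ev X)
        ∧ IsRightRigidDual X (R.dinv X) ((R.homEquiv' X (R.dinv X)).symm (𝟙 (R.dinv X)))
        ∧ ∀ Y : M, IsIso (R.canMap X Y) ∧ IsIso (R.canMap Y X)) := by
  constructor
  · constructor
    · rintro ⟨hL, hR⟩
      have r1 := Stmt5Aux.fwd1 R X hL
      have r2 := Stmt5Aux.fwd2 R X hR
      exact ⟨Stmt5Aux.allIso1 R X r1 (R.d X), Stmt5Aux.allIso2 R X r2 (R.dinv X)⟩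
    · rintro ⟨i1, i2⟩
      exact ⟨⟨R.d X, R.ev X, Stmt5Aux.bwd1 R X i1⟩,
        ⟨R.dinv X, Stmt5Aux.ev' R X, Stmt5Aux.bwd2 R X i2⟩⟩
  · rintro ⟨hL, hR⟩
    have r1 := Stmt5Aux.fwd1 R X hL
    have r2 := Stmt5Aux.fwd2 R X hR
    exact ⟨r1, r2, fun Y => ⟨Stmt5Aux.allIso1 R X r1 Y, Stmt5Aux.allIso2 R X r2 Y⟩⟩
end

section
/- For an r-category M the following are equivalent: (i) M is rigid (every object has a left and a right rigid dual); (ii) the canonical morphism X ⊗ Y → X ⊙ Y is an isomorphism for all X, Y ∈ M; (iii) the canonical morphism X ⊗ DX → X ⊙ DX is an isomorphism for every X ∈ M. -/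
open CategoryTheory Opposite MonoidalCategory

universe v u

section Auxiliary

open CategoryTheory Opposite MonoidalCategory RCat

variable {M : Type u} [Category.{v} M] [MonoidalCategory M]

/-- The sliding lemma: a zig-zag built from `u, c` composed with `u'` equals the
mirror zig-zag built from `c, u'` composed with `u`. -/
private lemma slide (P Q B : M) (u : P ⊗ B ⟶ 𝟙_ M) (u' : Q ⊗ B ⟶ 𝟙_ M) (c : 𝟙_ M ⟶ B ⊗ Q) :
    (((ρ_ P).inv ≫ (P ◁ c) ≫ (α_ P B Q).inv ≫ (u ▷ Q) ≫ (λ_ Q).hom) ▷ B) ≫ u'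
      = (P ◁ ((λ_ B).inv ≫ (c ▷ B) ≫ (α_ B Q B).hom ≫ (B ◁ u') ≫ (ρ_ B).hom)) ≫ u := by
  calc _ = 𝟙 _ ⊗≫ P ◁ c ▷ B ⊗≫ (u ▷ (Q ⊗ B) ≫ 𝟙_ M ◁ u') ⊗≫ 𝟙 _ := by monoidal
    _ = 𝟙 _ ⊗≫ P ◁ c ▷ B ⊗≫ ((P ⊗ B) ◁ u' ≫ u ▷ 𝟙_ M) ⊗≫ 𝟙 _ := by rw [← whisker_exchange]
    _ = _ := by monoidal

namespace RCat

variable (R : RCat M)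

lemma homEquiv_ev (X : M) : R.homEquiv (R.d X) X (R.ev X) = 𝟙 (R.d X) := by
  rw [ev, Equiv.apply_symm_apply]

lemma homEquiv_symm_eq {X Y : M} (f : X ⟶ R.d Y) :
    (R.homEquiv X Y).symm f = (f ▷ Y) ≫ R.ev Y := by
  apply (R.homEquiv X Y).injective
  rw [Equiv.apply_symm_apply, R.homEquiv_natX, homEquiv_ev, Category.comp_id]

lemma ev_cancel_left {X : M} (f : X ⟶ X) (hf : (R.d X ◁ f) ≫ R.ev X = R.ev X) : f = 𝟙 X := by
  have h1 := R.homEquiv_natY (R.d X) f (R.ev X)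
  rw [hf, homEquiv_ev, Category.id_comp] at h1
  have h2 : R.D.functor.map f.op = R.D.functor.map (𝟙 (op X)) := by
    rw [CategoryTheory.Functor.map_id]; exact h1.symm
  exact congrArg Quiver.Hom.unop (R.D.functor.map_injective h2)

lemma homEquiv'_natY (X : M) {Y Y' : M} (g : Y' ⟶ Y) (h : X ⊗ Y ⟶ 𝟙_ M) :
    R.homEquiv' X Y' (X ◁ g ≫ h) = g ≫ R.homEquiv' X Y h := by
  dsimp [homEquiv', opEquiv]
  rw [R.homEquiv_natY]
  have nat := R.D.symm.toAdjunction.homEquiv_naturality_right_symm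
    ((R.homEquiv X Y) h) g.op
  rw [show (R.D.symm.inverse).map g.op = R.D.functor.map g.op from rfl] at nat
  erw [nat]
  rfl

/-- The second evaluation `X ⊗ D⁻¹ X ⟶ 𝟙`. -/
noncomputable def ev2 (X : M) : X ⊗ R.dinv X ⟶ 𝟙_ M := (R.homEquiv' X (R.dinv X)).symm (𝟙 _)

lemma homEquiv'_symm_eq {X Y : M} (g : Y ⟶ R.dinv X) :
    (R.homEquiv' X Y).symm g = (X ◁ g) ≫ R.ev2 X := by
  apply (R.homEquiv' X Y).injective
  rw [Equiv.apply_symm_apply, homEquiv'_natY, ev2, Equiv.apply_symm_apply, Category.comp_id]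

/-- The double-evaluation morphism used to define `canMap`. -/
abbrev Ecan (X Y : M) : (R.d Y ⊗ R.d X) ⊗ (X ⊗ Y) ⟶ 𝟙_ M :=
  (α_ (R.d Y) (R.d X) (X ⊗ Y)).hom ≫
    (R.d Y ◁ ((α_ (R.d X) X Y).inv ≫ (R.ev X ▷ Y) ≫ (λ_ Y).hom)) ≫ R.ev Y

lemma comp_canMap {X Y W : M} (f : W ⟶ X ⊗ Y) :
    f ≫ R.canMap X Y = R.homEquiv' (R.d Y ⊗ R.d X) W (((R.d Y ⊗ R.d X) ◁ f) ≫ R.Ecan X Y) := by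
  rw [canMap, ← homEquiv'_natY]

end RCat

end Auxiliary


section Pairing

open CategoryTheory Opposite MonoidalCategory RCat

variable {M : Type u} [Category.{v} M] [MonoidalCategory M] (R : RCat M)

/-- If `X` has a left rigid dual, then `(X, D X)` is an exact pairing with
evaluation `ev X`. -/
theorem RCat.exactPairing_of_dual {X : M}
    (hX : ∃ (A : M) (ε : A ⊗ X ⟶ 𝟙_ M), IsRightRigidDual A X ε) :
    ∃ c : 𝟙_ M ⟶ X ⊗ R.d X,
      (R.d X ◁ c ≫ (α_ (R.d X) X (R.d X)).inv ≫ R.ev X ▷ R.d X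
        = (ρ_ (R.d X)).hom ≫ (λ_ (R.d X)).inv) ∧
      (c ▷ X ≫ (α_ X (R.d X) X).hom ≫ X ◁ R.ev X = (λ_ X).hom ≫ (ρ_ X).inv) := by
  obtain ⟨A, εA, cA, tri1, tri2⟩ := hX
  set a : A ⟶ R.d X := R.homEquiv A X εA with ha_def
  have ha : a ▷ X ≫ R.ev X = εA := by
    rw [← R.homEquiv_symm_eq]; exact (R.homEquiv A X).symm_apply_apply εA
  set j : R.d X ⟶ A :=
    (ρ_ (R.d X)).inv ≫ (R.d X ◁ cA) ≫ (α_ (R.d X) X A).inv ≫ (R.ev X ▷ A) ≫ (λ_ A).hom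
    with hj
  have hslide := slide (R.d X) A X (R.ev X) εA cA
  rw [tri2, ← hj] at hslide
  have hja : j ≫ a = 𝟙 (R.d X) := by
    apply (R.homEquiv (R.d X) X).symm.injective
    rw [homEquiv_symm_eq, homEquiv_symm_eq, comp_whiskerRight, Category.assoc, ha, hslide]
    simp
  refine ⟨cA ≫ (X ◁ a), ?_, ?_⟩
  ·
    calc R.d X ◁ (cA ≫ X ◁ a) ≫ (α_ (R.d X) X (R.d X)).inv ≫ R.ev X ▷ R.d X
        = 𝟙 _ ⊗≫ R.d X ◁ cA ⊗≫ ((R.d X ⊗ X) ◁ a ≫ R.ev X ▷ R.d X) ⊗≫ 𝟙 _ := by monoidal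
      _ = 𝟙 _ ⊗≫ R.d X ◁ cA ⊗≫ (R.ev X ▷ A ≫ 𝟙_ M ◁ a) ⊗≫ 𝟙 _ := by rw [whisker_exchange]
      _ = (ρ_ (R.d X)).hom ≫ (j ≫ a) ≫ (λ_ (R.d X)).inv := by rw [hj]; monoidal
      _ = (ρ_ (R.d X)).hom ≫ (λ_ (R.d X)).inv := by rw [hja, Category.id_comp]
  ·
    calc (cA ≫ X ◁ a) ▷ X ≫ (α_ X (R.d X) X).hom ≫ X ◁ R.ev X
        = 𝟙 _ ⊗≫ cA ▷ X ⊗≫ X ◁ (a ▷ X ≫ R.ev X) ⊗≫ 𝟙 _ := by monoidal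
      _ = 𝟙 _ ⊗≫ cA ▷ X ⊗≫ X ◁ εA ⊗≫ 𝟙 _ := by rw [ha]
      _ = (λ_ X).hom ≫ ((λ_ X).inv ≫ cA ▷ X ≫ (α_ X A X).hom ≫ X ◁ εA ≫ (ρ_ X).hom) ≫
            (ρ_ X).inv := by monoidal
      _ = (λ_ X).hom ≫ (ρ_ X).inv := by rw [tri2, Category.id_comp]

end Pairing


section Part1

open CategoryTheory Opposite MonoidalCategory RCat

variable {M : Type u} [Category.{v} M] [MonoidalCategory M] (R : RCat M)

/-- (i) implies (ii): if `X` and `Y` have left rigid duals, then the canonical map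
`X ⊗ Y ⟶ X ⊙ Y` is an isomorphism. -/
theorem RCat.isIso_canMap_of_duals {X Y : M}
    (hX : ∃ (A : M) (ε : A ⊗ X ⟶ 𝟙_ M), IsRightRigidDual A X ε)
    (hY : ∃ (A : M) (ε : A ⊗ Y ⟶ 𝟙_ M), IsRightRigidDual A Y ε) :
    IsIso (R.canMap X Y) := by
  obtain ⟨cX, hX1, hX2⟩ := R.exactPairing_of_dual hX
  obtain ⟨cY, hY1, hY2⟩ := R.exactPairing_of_dual hY
  letI epX : ExactPairing X (R.d X) := ⟨cX, R.ev X, hX1, hX2⟩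
  letI epY : ExactPairing Y (R.d Y) := ⟨cY, R.ev Y, hY1, hY2⟩
  have hevX : (ε_ X (R.d X)) = R.ev X := rfl
  have hevY : (ε_ Y (R.d Y)) = R.ev Y := rfl
  have inner : ∀ (W : M) (h : W ⟶ X ⊗ Y),
      (tensorLeftHomEquiv W X (R.d X) Y).symm h
        = R.d X ◁ h ≫ (α_ (R.d X) X Y).inv ≫ R.ev X ▷ Y ≫ (λ_ Y).hom := fun W h => rfl
  have outer : ∀ (V : M) (m : V ⟶ Y),
      (R.d Y ◁ m) ≫ R.ev Y
        = (tensorLeftHomEquiv V Y (R.d Y) (𝟙_ M)).symm (m ≫ (ρ_ Y).inv) := by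
    intro V m
    dsimp [tensorLeftHomEquiv]
    rw [hevY]
    monoidal
  have master : ∀ (W : M) (h : W ⟶ X ⊗ Y),
      ((R.d Y ⊗ R.d X) ◁ h) ≫ R.Ecan X Y
        = (α_ (R.d Y) (R.d X) W).hom ≫
            (tensorLeftHomEquiv (R.d X ⊗ W) Y (R.d Y) (𝟙_ M)).symm
              ((tensorLeftHomEquiv W X (R.d X) Y).symm h ≫ (ρ_ Y).inv) := by
    intro W h
    rw [← outer, inner]
    dsimp only [Ecan]
    monoidal
  have post : ∀ (W : M) (f : W ⟶ X ⊗ Y),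
      f ≫ R.canMap X Y = R.homEquiv' (R.d Y ⊗ R.d X) W
        ((α_ (R.d Y) (R.d X) W).hom ≫
          (tensorLeftHomEquiv (R.d X ⊗ W) Y (R.d Y) (𝟙_ M)).symm
            ((tensorLeftHomEquiv W X (R.d X) Y).symm f ≫ (ρ_ Y).inv)) := by
    intro W f; rw [R.comp_canMap, master]
  set O := R.odot X Y with hO
  set v : O ⟶ X ⊗ Y := (tensorLeftHomEquiv O X (R.d X) Y)
      (((tensorLeftHomEquiv (R.d X ⊗ O) Y (R.d Y) (𝟙_ M))
        ((α_ (R.d Y) (R.d X) O).inv ≫ (R.homEquiv' (R.d Y ⊗ R.d X) O).symm (𝟙 O)))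
        ≫ (ρ_ Y).hom) with hv
  have hvc : v ≫ R.canMap X Y = 𝟙 O := by
    rw [post, hv, Equiv.symm_apply_apply, Category.assoc, Iso.hom_inv_id, Category.comp_id,
      Equiv.symm_apply_apply, Iso.hom_inv_id_assoc, Equiv.apply_symm_apply]
  have inj : ∀ (f g : (X ⊗ Y) ⟶ X ⊗ Y), f ≫ R.canMap X Y = g ≫ R.canMap X Y → f = g := by
    intro f g hfg
    rw [post, post] at hfg
    have h1 := (R.homEquiv' (R.d Y ⊗ R.d X) (X ⊗ Y)).injective hfg
    rw [cancel_epi ((α_ (R.d Y) (R.d X) (X ⊗ Y)).hom)] at h1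
    have h2 := (tensorLeftHomEquiv _ Y (R.d Y) (𝟙_ M)).symm.injective h1
    rw [cancel_mono ((ρ_ Y).inv)] at h2
    exact (tensorLeftHomEquiv _ X (R.d X) Y).symm.injective h2
  have hcv : R.canMap X Y ≫ v = 𝟙 (X ⊗ Y) := by
    apply inj
    rw [Category.assoc, hvc, Category.comp_id, Category.id_comp]
  exact ⟨⟨v, hcv, hvc⟩⟩

end Part1


section Part2

open CategoryTheory Opposite MonoidalCategory RCat

variable {M : Type u} [Category.{v} M] [MonoidalCategory M] (R : RCat M)

/-- (iii) implies that `D X` is a left rigid dual of `X`. -/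
theorem RCat.isRightRigidDual_ev {X : M} (h : IsIso (R.canMap X (R.d X))) :
    IsRightRigidDual (R.d X) X (R.ev X) := by
  set c : 𝟙_ M ⟶ X ⊗ R.d X :=
    R.homEquiv' (R.d (R.d X) ⊗ R.d X) (𝟙_ M)
        ((ρ_ (R.d (R.d X) ⊗ R.d X)).hom ≫ R.ev (R.d X)) ≫ inv (R.canMap X (R.d X)) with hc
  have hkey : ((R.d (R.d X) ⊗ R.d X) ◁ c) ≫ R.Ecan X (R.d X)
      = (ρ_ (R.d (R.d X) ⊗ R.d X)).hom ≫ R.ev (R.d X) := by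
    apply (R.homEquiv' (R.d (R.d X) ⊗ R.d X) (𝟙_ M)).injective
    rw [← R.comp_canMap, hc, Category.assoc, IsIso.inv_hom_id, Category.comp_id]
  set t : R.d X ⟶ R.d X := (ρ_ (R.d X)).inv ≫ (R.d X ◁ c) ≫ (α_ (R.d X) X (R.d X)).inv ≫
    (R.ev X ▷ R.d X) ≫ (λ_ (R.d X)).hom with htdef
  have e1 : ((R.d (R.d X) ⊗ R.d X) ◁ c) ≫ R.Ecan X (R.d X)
      = (α_ (R.d (R.d X)) (R.d X) (𝟙_ M)).hom ≫
          (R.d (R.d X) ◁ ((ρ_ (R.d X)).hom ≫ t)) ≫ R.ev (R.d X) := by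
    rw [htdef]; dsimp only [Ecan]; monoidal
  have e2 : (ρ_ (R.d (R.d X) ⊗ R.d X)).hom ≫ R.ev (R.d X)
      = (α_ (R.d (R.d X)) (R.d X) (𝟙_ M)).hom ≫
          (R.d (R.d X) ◁ (ρ_ (R.d X)).hom) ≫ R.ev (R.d X) := by monoidal
  have e3 : (R.d (R.d X) ◁ t) ≫ R.ev (R.d X) = R.ev (R.d X) := by
    have h4 := hkey
    rw [e1, e2, cancel_epi ((α_ (R.d (R.d X)) (R.d X) (𝟙_ M)).hom),
      MonoidalCategory.whiskerLeft_comp, Category.assoc,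
      cancel_epi (R.d (R.d X) ◁ (ρ_ (R.d X)).hom)] at h4
    exact h4
  have ht : t = 𝟙 (R.d X) := R.ev_cancel_left t e3
  have hs : (λ_ X).inv ≫ (c ▷ X) ≫ (α_ X (R.d X) X).hom ≫ (X ◁ R.ev X) ≫ (ρ_ X).hom
      = 𝟙 X := by
    apply R.ev_cancel_left
    have hsl := slide (R.d X) (R.d X) X (R.ev X) (R.ev X) c
    rw [← htdef, ht] at hsl
    rw [← hsl]
    simp
  refine ⟨c, ?_, hs⟩
  rw [← htdef]; exact ht

/-- A rigid-duality witness can be transported along an isomorphism. -/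
theorem isRightRigidDual_of_iso {A A' B : M} (e : A ≅ A') {ε : A ⊗ B ⟶ 𝟙_ M}
    (hd : IsRightRigidDual A B ε) : IsRightRigidDual A' B ((e.inv ▷ B) ≫ ε) := by
  obtain ⟨c, h1, h2⟩ := hd
  refine ⟨c ≫ (B ◁ e.hom), ?_, ?_⟩
  · calc (ρ_ A').inv ≫ (A' ◁ (c ≫ B ◁ e.hom)) ≫ (α_ A' B A').inv ≫
          (((e.inv ▷ B) ≫ ε) ▷ A') ≫ (λ_ A').hom
        = 𝟙 _ ⊗≫ (A' ◁ c) ⊗≫ (A' ◁ (B ◁ e.hom) ≫ e.inv ▷ (B ⊗ A')) ⊗≫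
            (ε ▷ A') ⊗≫ 𝟙 _ := by monoidal
      _ = 𝟙 _ ⊗≫ (A' ◁ c) ⊗≫ (e.inv ▷ (B ⊗ A) ≫ A ◁ (B ◁ e.hom)) ⊗≫
            (ε ▷ A') ⊗≫ 𝟙 _ := by rw [whisker_exchange]
      _ = 𝟙 _ ⊗≫ (A' ◁ c ≫ e.inv ▷ (B ⊗ A)) ⊗≫ ((A ⊗ B) ◁ e.hom ≫ ε ▷ A') ⊗≫ 𝟙 _ := by
            monoidal
      _ = 𝟙 _ ⊗≫ (e.inv ▷ 𝟙_ M ≫ A ◁ c) ⊗≫ (ε ▷ A ≫ 𝟙_ M ◁ e.hom) ⊗≫ 𝟙 _ := by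
            rw [whisker_exchange, whisker_exchange]
      _ = e.inv ≫ ((ρ_ A).inv ≫ (A ◁ c) ≫ (α_ A B A).inv ≫ (ε ▷ A) ≫ (λ_ A).hom) ≫
            e.hom := by monoidal
      _ = 𝟙 A' := by rw [h1]; simp
  · calc (λ_ B).inv ≫ ((c ≫ B ◁ e.hom) ▷ B) ≫ (α_ B A' B).hom ≫
          (B ◁ ((e.inv ▷ B) ≫ ε)) ≫ (ρ_ B).hom
        = 𝟙 _ ⊗≫ (c ▷ B) ⊗≫ (B ◁ ((e.hom ≫ e.inv) ▷ B)) ⊗≫ (B ◁ ε) ⊗≫ 𝟙 _ := by monoidal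
      _ = (λ_ B).inv ≫ (c ▷ B) ≫ (α_ B A B).hom ≫ (B ◁ ε) ≫ (ρ_ B).hom := by
            rw [Iso.hom_inv_id]; monoidal
      _ = 𝟙 B := h2

/-- (iii) implies (i). -/
theorem RCat.duals_of_isIso (h : ∀ X : M, IsIso (R.canMap X (R.d X))) (X : M) :
    (∃ (A : M) (ε : A ⊗ X ⟶ 𝟙_ M), IsRightRigidDual A X ε)
      ∧ (∃ (B : M) (ε : X ⊗ B ⟶ 𝟙_ M), IsRightRigidDual X B ε) := by
  constructor
  · exact ⟨R.d X, R.ev X, R.isRightRigidDual_ev (h X)⟩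
  · have hd := R.isRightRigidDual_ev (h (R.dinv X))
    have e : R.d (R.dinv X) ≅ X := R.D.counitIso.app X
    exact ⟨R.dinv X, _, isRightRigidDual_of_iso e hd⟩

end Part2

/-- For an r-category `M` the following are equivalent:
(i) every object of `M` is rigid; (ii) the canonical morphism `X ⊗ Y ⟶ X ⊙ Y` is an
isomorphism for all `X, Y`; (iii) the canonical morphism `X ⊗ D X ⟶ X ⊙ D X` is an
isomorphism for every `X`. -/
theorem stmt6 {M : Type u} [Category.{v} M] [MonoidalCategory M] (R : RCat M) :
    ((∀ X : M, (∃ (A : M) (ε : A ⊗ X ⟶ 𝟙_ M), IsRightRigidDual A X ε)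
        ∧ (∃ (B : M) (ε : X ⊗ B ⟶ 𝟙_ M), IsRightRigidDual X B ε)) ↔
      (∀ X Y : M, IsIso (R.canMap X Y)))
    ∧ ((∀ X Y : M, IsIso (R.canMap X Y)) ↔
      (∀ X : M, IsIso (R.canMap X (R.d X)))) := by
  constructor
  · constructor
    · intro hi X Y
      exact R.isIso_canMap_of_duals (hi X).1 (hi Y).1
    · intro hii X
      exact R.duals_of_isIso (fun Z => hii Z (R.d Z)) X
  · constructor
    · intro hii X
      exact hii X (R.d X)
    · intro hiii X Y
      exact R.isIso_canMap_of_duals (R.duals_of_isIso hiii X).1 (R.duals_of_isIso hiii Y).1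
end

section
/- Let (M, K) be a Grothendieck–Verdier category with duality functor D. There is a one-to-one correspondence between natural families of isomorphisms ψ_{X,Y} : Hom(X ⊗ Y, K) ≅ Hom(Y ⊗ X, K) and natural isomorphisms f : Id_M ≅ D², where ψ corresponds to f precisely when for all X, Y the composite Hom(X⊗Y, K) → Hom(D²Y ⊗ X, K) → Hom(Y ⊗ X, K), given by the canonical isomorphism g followed by precomposition with f_Y ⊗ id_X, equals ψ_{X,Y}. -/
open CategoryTheory Opposite MonoidalCategory

universe v u

namespace GVCat

variable {M : Type u} [Category.{v} M] [MonoidalCategory M] (G : GVCat M)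

lemma homEquiv'_eq (A X : M) (k : A ⊗ X ⟶ G.K) :
    G.homEquiv' A X k
      = (G.D.inverse.map (G.homEquiv A X k) ≫ G.D.unitIso.inv.app (op X)).unop := by
  simp [homEquiv', opEquiv, Equivalence.toAdjunction, Adjunction.homEquiv,
    Equivalence.symm_counitIso, Equivalence.counit]

lemma homEquiv'_natX {A X X' : M} (q : X' ⟶ X) (k : A ⊗ X ⟶ G.K) :
    G.homEquiv' A X' (A ◁ q ≫ k) = q ≫ G.homEquiv' A X k := by
  rw [homEquiv'_eq, homEquiv'_eq, G.homEquiv_natY, Functor.map_comp, Category.assoc]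
  have hn : G.D.inverse.map (G.D.functor.map q.op) ≫ G.D.unitIso.inv.app (op X')
      = G.D.unitIso.inv.app (op X) ≫ q.op := by
    simp
  rw [hn]
  simp

lemma homEquiv'_natA {A A' : M} (q : A' ⟶ A) (X : M) (k : A ⊗ X ⟶ G.K) :
    G.homEquiv' A' X (q ▷ X ≫ k) = G.homEquiv' A X k ≫ G.dinvmap q := by
  rw [homEquiv'_eq, homEquiv'_eq, G.homEquiv_natX, Functor.map_comp]
  simp

lemma homEquiv'_g (X Y : M) (h : X ⊗ Y ⟶ G.K) :
    G.homEquiv' (G.dd Y) X (G.g X Y h)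
      = G.homEquiv X Y h ≫ (G.dinvD (G.d Y)).inv := by
  simp [g, Iso.homCongr]

lemma g_natX {X X' : M} (q : X' ⟶ X) (Y : M) (h : X ⊗ Y ⟶ G.K) :
    G.g X' Y (q ▷ Y ≫ h) = (G.dd Y ◁ q) ≫ G.g X Y h := by
  apply (G.homEquiv' (G.dd Y) X').injective
  rw [homEquiv'_g, homEquiv'_natX, homEquiv'_g, G.homEquiv_natX, Category.assoc]

lemma unit_aux {Y Y' : M} (q : Y' ⟶ Y) :
    G.dmap q ≫ (G.dinvD (G.d Y')).inv
      = (G.dinvD (G.d Y)).inv ≫ G.dinvmap (G.dmap (G.dmap q)) := by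
  have h2 := congrArg Quiver.Hom.unop (G.D.unitIso.inv.naturality (G.dmap q).op)
  simp only [Functor.comp_map, Functor.id_map, unop_comp] at h2
  dsimp [dinvD]
  exact h2.symm

lemma g_natY (X : M) {Y Y' : M} (q : Y' ⟶ Y) (h : X ⊗ Y ⟶ G.K) :
    G.g X Y' (X ◁ q ≫ h) = (G.dmap (G.dmap q) ▷ X) ≫ G.g X Y h := by
  apply (G.homEquiv' (G.dd Y') X).injective
  rw [homEquiv'_g, G.homEquiv_natY, homEquiv'_natA, homEquiv'_g, Category.assoc,
    Category.assoc, unit_aux]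

lemma ddF_map {Y Y' : M} (q : Y' ⟶ Y) : G.ddF.map q = G.dmap (G.dmap q) := rfl

lemma whisker_cancel {Y' Y : M} {a b : Y' ⟶ G.dd Y}
    (hab : ∀ (X : M) (k : G.dd Y ⊗ X ⟶ G.K), (a ▷ X) ≫ k = (b ▷ X) ≫ k) : a = b := by
  have h := congrArg (G.homEquiv Y' (G.d Y))
    (hab (G.d Y) ((G.homEquiv (G.dd Y) (G.d Y)).symm (𝟙 (G.dd Y))))
  rwa [G.homEquiv_natX, G.homEquiv_natX, Equiv.apply_symm_apply, Category.comp_id,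
    Category.comp_id] at h

lemma precomp_conj {Y' Y : M} (a : Y' ⟶ G.dd Y) (X : M) (u : G.dd Y ⟶ G.d X) :
    a ≫ u = G.homEquiv Y' X ((a ▷ X) ≫ (G.homEquiv (G.dd Y) X).symm u) := by
  rw [G.homEquiv_natX, Equiv.apply_symm_apply]

lemma isIso_of_precomp {Y : M} (a : Y ⟶ G.dd Y)
    (hbij : ∀ W : M, Function.Bijective (fun u : G.dd Y ⟶ G.d W => a ≫ u)) :
    IsIso a := by
  obtain ⟨b', hb'⟩ := (hbij (G.dinv Y)).2 ((G.dDinv Y).inv)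
  simp only at hb'
  refine ⟨b' ≫ (G.dDinv Y).hom, ?_, ?_⟩
  · rw [← Category.assoc, hb', Iso.inv_hom_id]
  · have h2 : a ≫ ((b' ≫ (G.dDinv Y).hom) ≫ a) = a ≫ 𝟙 (G.dd Y) := by
      rw [← Category.assoc, ← Category.assoc, hb']
      simp
    exact (hbij (G.d Y)).1 h2

section Psi

variable (ψ : ∀ X Y : M, (X ⊗ Y ⟶ G.K) ≃ (Y ⊗ X ⟶ G.K))

/-- The candidate component `f_Y : Y ⟶ D² Y` extracted from `ψ`. -/
noncomputable def f0 (Y : M) : Y ⟶ G.dd Y :=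
  G.homEquiv Y (G.d Y)
    (ψ (G.d Y) Y ((G.g (G.d Y) Y).symm ((G.homEquiv (G.dd Y) (G.d Y)).symm (𝟙 (G.dd Y)))))

variable (hψX : ∀ {X X' : M} (f : X' ⟶ X) (Y : M) (h : X ⊗ Y ⟶ G.K),
        ψ X' Y (f ▷ Y ≫ h) = (Y ◁ f) ≫ ψ X Y h)
  (hψY : ∀ (X : M) {Y Y' : M} (q : Y' ⟶ Y) (h : X ⊗ Y ⟶ G.K),
        ψ X Y' (X ◁ q ≫ h) = (q ▷ X) ≫ ψ X Y h)

include hψX in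
lemma theta_nat {Y X X' : M} (q : X' ⟶ X) (u : G.dd Y ⟶ G.d X) :
    G.homEquiv Y X' (ψ X' Y ((G.g X' Y).symm ((G.homEquiv (G.dd Y) X').symm (u ≫ G.dmap q))))
      = G.homEquiv Y X (ψ X Y ((G.g X Y).symm ((G.homEquiv (G.dd Y) X).symm u))) ≫ G.dmap q := by
  have e1 : (G.homEquiv (G.dd Y) X').symm (u ≫ G.dmap q)
      = G.dd Y ◁ q ≫ (G.homEquiv (G.dd Y) X).symm u := by
    apply (G.homEquiv (G.dd Y) X').injective
    rw [Equiv.apply_symm_apply, G.homEquiv_natY, Equiv.apply_symm_apply]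
  have e2 : (G.g X' Y).symm (G.dd Y ◁ q ≫ (G.homEquiv (G.dd Y) X).symm u)
      = q ▷ Y ≫ (G.g X Y).symm ((G.homEquiv (G.dd Y) X).symm u) := by
    apply (G.g X' Y).injective
    rw [Equiv.apply_symm_apply, G.g_natX, Equiv.apply_symm_apply]
  rw [e1, e2, hψX, G.homEquiv_natY]

include hψX in
lemma psi_char (X Y : M) (h : X ⊗ Y ⟶ G.K) :
    ψ X Y h = (G.f0 ψ Y ▷ X) ≫ G.g X Y h := by
  have key : ∀ (X : M) (u : G.dd Y ⟶ G.d X),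
      G.homEquiv Y X (ψ X Y ((G.g X Y).symm ((G.homEquiv (G.dd Y) X).symm u)))
        = G.f0 ψ Y ≫ u := by
    intro X u
    obtain ⟨α, hα⟩ := G.D.functor.map_surjective (X := op (G.d Y)) (Y := op X) u
    have h1 := G.theta_nat ψ hψX (Y := Y) (q := α.unop) (u := 𝟙 (G.dd Y))
    have h2 : G.dmap α.unop = u := by rw [← hα]; rfl
    rw [h2] at h1
    rw [Category.id_comp] at h1
    rw [h1]
    rfl
  have h3 := key X (G.homEquiv (G.dd Y) X (G.g X Y h))
  simp only [Equiv.symm_apply_apply] at h3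
  apply (G.homEquiv Y X).injective
  rw [h3, G.homEquiv_natX]

include hψX hψY in
lemma f0_nat {Y Y' : M} (q : Y' ⟶ Y) :
    q ≫ G.f0 ψ Y = G.f0 ψ Y' ≫ G.dmap (G.dmap q) := by
  apply G.whisker_cancel
  intro X k
  have hk : k = G.g X Y ((G.g X Y).symm k) := (Equiv.apply_symm_apply _ _).symm
  set h := (G.g X Y).symm k with hh
  rw [hk]
  calc ((q ≫ G.f0 ψ Y) ▷ X) ≫ G.g X Y h
      = (q ▷ X) ≫ (G.f0 ψ Y ▷ X) ≫ G.g X Y h := by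
        rw [comp_whiskerRight, Category.assoc]
    _ = (q ▷ X) ≫ ψ X Y h := by rw [← G.psi_char ψ hψX]
    _ = ψ X Y' (X ◁ q ≫ h) := (hψY X q h).symm
    _ = (G.f0 ψ Y' ▷ X) ≫ G.g X Y' (X ◁ q ≫ h) := G.psi_char ψ hψX _ _ _
    _ = (G.f0 ψ Y' ▷ X) ≫ (G.dmap (G.dmap q) ▷ X) ≫ G.g X Y h := by rw [G.g_natY]
    _ = ((G.f0 ψ Y' ≫ G.dmap (G.dmap q)) ▷ X) ≫ G.g X Y h := by
        rw [comp_whiskerRight, Category.assoc]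

include hψX in
lemma f0_isIso (Y : M) : IsIso (G.f0 ψ Y) := by
  apply G.isIso_of_precomp
  intro W
  have hb : Function.Bijective (fun k : G.dd Y ⊗ W ⟶ G.K => (G.f0 ψ Y ▷ W) ≫ k) := by
    have he : (fun k : G.dd Y ⊗ W ⟶ G.K => (G.f0 ψ Y ▷ W) ≫ k)
        = (ψ W Y) ∘ (G.g W Y).symm := by
      funext k
      simp only [Function.comp_apply]
      rw [G.psi_char ψ hψX, Equiv.apply_symm_apply]
    rw [he]
    exact ((G.g W Y).symm.trans (ψ W Y)).bijective
  have he2 : (fun u : G.dd Y ⟶ G.d W => G.f0 ψ Y ≫ u)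
      = ⇑(G.homEquiv Y W) ∘ (fun k => (G.f0 ψ Y ▷ W) ≫ k) ∘ ⇑(G.homEquiv (G.dd Y) W).symm := by
    funext u
    exact G.precomp_conj _ _ _
  rw [he2]
  exact (G.homEquiv Y W).bijective.comp (hb.comp (G.homEquiv (G.dd Y) W).symm.bijective)

end Psi

end GVCat

/-- Let `(M, K)` be a Grothendieck–Verdier category. There is a
one-to-one correspondence between natural families of isomorphisms
`ψ_{X,Y} : Hom(X ⊗ Y, K) ≅ Hom(Y ⊗ X, K)` and natural isomorphisms `f : Id ≅ D²`,
where `ψ` corresponds to `f` precisely when `ψ_{X,Y}(h) = (f_Y ▷ X) ≫ g_{X,Y}(h)`: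
every natural family `ψ` comes from a unique natural isomorphism `f`, and conversely
every natural isomorphism `f` determines such a natural family of bijections. -/
theorem stmt11 {M : Type u} [Category.{v} M] [MonoidalCategory M] (G : GVCat M) :
    (∀ ψ : ∀ X Y : M, (X ⊗ Y ⟶ G.K) ≃ (Y ⊗ X ⟶ G.K),
      (∀ {X X' : M} (f : X' ⟶ X) (Y : M) (h : X ⊗ Y ⟶ G.K),
        ψ X' Y (f ▷ Y ≫ h) = (Y ◁ f) ≫ ψ X Y h) →
      (∀ (X : M) {Y Y' : M} (q : Y' ⟶ Y) (h : X ⊗ Y ⟶ G.K),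
        ψ X Y' (X ◁ q ≫ h) = (q ▷ X) ≫ ψ X Y h) →
      ∃! f : 𝟭 M ≅ G.ddF,
        ∀ (X Y : M) (h : X ⊗ Y ⟶ G.K),
          ψ X Y h = (f.hom.app Y ▷ X) ≫ G.g X Y h)
    ∧ (∀ f : 𝟭 M ≅ G.ddF,
        (∀ {X X' : M} (q : X' ⟶ X) (Y : M) (h : X ⊗ Y ⟶ G.K),
          (f.hom.app Y ▷ X') ≫ G.g X' Y (q ▷ Y ≫ h)
            = (Y ◁ q) ≫ ((f.hom.app Y ▷ X) ≫ G.g X Y h))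
        ∧ (∀ (X : M) {Y Y' : M} (q : Y' ⟶ Y) (h : X ⊗ Y ⟶ G.K),
          (f.hom.app Y' ▷ X) ≫ G.g X Y' (X ◁ q ≫ h)
            = (q ▷ X) ≫ ((f.hom.app Y ▷ X) ≫ G.g X Y h))
        ∧ (∀ X Y : M,
          Function.Bijective
            (fun h : X ⊗ Y ⟶ G.K => (f.hom.app Y ▷ X) ≫ G.g X Y h))) := by
  constructor
  · intro ψ hψX hψY
    have hiso : ∀ Y : M, IsIso (G.f0 ψ Y) := fun Y => G.f0_isIso ψ hψX Y
    refine ⟨NatIso.ofComponents (fun Y => @asIso _ _ _ _ _ (hiso Y)) ?_, ?_, ?_⟩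
    · intro Y' Y q
      simp only [Functor.id_map, asIso_hom]
      exact G.f0_nat ψ hψX hψY q
    · intro X Y h
      exact G.psi_char ψ hψX X Y h
    · intro f' hf'
      apply Iso.ext
      apply NatTrans.ext
      funext Y
      simp only [NatIso.ofComponents_hom_app, asIso_hom]
      apply G.whisker_cancel
      intro X k
      have hk : k = G.g X Y ((G.g X Y).symm k) := (Equiv.apply_symm_apply _ _).symm
      rw [hk]
      exact (hf' X Y ((G.g X Y).symm k)).symm.trans (G.psi_char ψ hψX X Y ((G.g X Y).symm k))
  · intro f
    refine ⟨?_, ?_, ?_⟩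
    · intro X X' q Y h
      rw [G.g_natX]
      have e := whisker_exchange (f.hom.app Y) q
      exact (Category.assoc _ _ _).symm.trans
        ((congrArg (· ≫ G.g X Y h) e.symm).trans (Category.assoc _ _ _))
    · intro X Y Y' q h
      rw [G.g_natY]
      have hn : f.hom.app Y' ≫ G.dmap (G.dmap q) = q ≫ f.hom.app Y := by
        have := f.hom.naturality q
        simp only [Functor.id_map] at this
        rw [← G.ddF_map]
        exact this.symm
      exact (Category.assoc _ _ _).symm.trans ((congrArg (· ≫ G.g X Y h)
        ((comp_whiskerRight _ _ X).symm.trans ((congrArg (· ▷ X) hn).trans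
          (comp_whiskerRight _ _ X)))).trans (Category.assoc _ _ _))
    · intro X Y
      have : IsIso (f.hom.app Y ▷ X) := by
        have : IsIso (f.hom.app Y) := inferInstance
        infer_instance
      constructor
      · intro k k' hkk
        apply (G.g X Y).injective
        exact (cancel_epi (f.hom.app Y ▷ X)).1 hkk
      · intro k
        exact ⟨(G.g X Y).symm (@inv _ _ _ _ (f.hom.app Y ▷ X) this ≫ k), by
          exact (congrArg (fun t => f.hom.app Y ▷ X ≫ t) (Equiv.apply_symm_apply (G.g X Y) _)).trans
            (IsIso.hom_inv_id_assoc (f.hom.app Y ▷ X) k)⟩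
end
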